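/- arXiv:2603.25506 — 8 statements merged into one kernel-verified Lean document; each statement's English description precedes it below -/
import Mathlib

section
/- Every polynomial u_n in the sequence has integer coefficients; that is, u_n lies in the subring ℤ[b,c] of ℚ[b,c] for all n ≥ 0. -/
/-!
The recurrence forces a quadratic identity on the Cauchy square of the sequence:
`∑_{i+j=n+2} uᵢ uⱼ = 4 ∑_{i+j=n+1} (i² - ij + j² + i - b) uᵢ uⱼ - 4c ∑_{i+j=n} uᵢ uⱼ`.
The left side is `2 u_{n+2}` plus products `u_{i+1} u_{j+1}` of earlier terms, so if all
`u_{k+1}` with `k ≤ n` lie in `2 ℤ[b,c]`, then `2 u_{n+2} ∈ 4 ℤ[b,c]`, and by induction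
`u_{n+1} ∈ 2 ℤ[b,c]` for every `n`.
-/

open Finset Finset.Nat HasAntidiagonal

section Recurrence

variable {R : Type*} [CommRing R] {b c : R} {u : ℕ → R}

theorem two_mul_sum_antidiagonal_mul (u : ℕ → R) (n : ℕ) (f : ℕ → ℕ → R) :
    2 * ∑ p ∈ antidiagonal n, f p.1 p.2 * (u p.1 * u p.2) =
      ∑ p ∈ antidiagonal n, (f p.1 p.2 + f p.2 p.1) * (u p.1 * u p.2) := by
  rw [two_mul]
  nth_rewrite 2 [← sum_antidiagonal_swap]
  rw [← sum_add_distrib]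
  exact sum_congr rfl fun p _ => by simp only [Prod.fst_swap, Prod.snd_swap]; ring

theorem sum_antidiagonal_mul_eq_of_add_swap_eq [IsDomain R] [CharZero R] (u : ℕ → R) {n : ℕ}
    {f g : ℕ → ℕ → R} (h : ∀ i j, i + j = n → f i j + f j i = g i j + g j i) :
    ∑ p ∈ antidiagonal n, f p.1 p.2 * (u p.1 * u p.2) =
      ∑ p ∈ antidiagonal n, g p.1 p.2 * (u p.1 * u p.2) := by
  apply mul_left_cancel₀ (two_ne_zero (α := R))
  rw [two_mul_sum_antidiagonal_mul, two_mul_sum_antidiagonal_mul]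
  exact sum_congr rfl fun p hp => by rw [h p.1 p.2 (mem_antidiagonal.mp hp)]

theorem sum_antidiagonal_add_two (u : ℕ → R) (n : ℕ) :
    ∑ p ∈ antidiagonal (n + 2), u p.1 * u p.2 =
      2 * (u 0 * u (n + 2)) + ∑ p ∈ antidiagonal n, u (p.1 + 1) * u (p.2 + 1) := by
  rw [sum_antidiagonal_succ, sum_antidiagonal_succ']
  ring

theorem mul_mem_of_mem_antidiagonal {S : Subring R} {n : ℕ} (hu : ∀ k ≤ n, u k ∈ S)
    {p : ℕ × ℕ} (hp : p ∈ antidiagonal n) : u p.1 * u p.2 ∈ S :=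
  mul_mem (hu _ (antidiagonal.fst_le hp)) (hu _ (antidiagonal.snd_le hp))

variable (b c) in
/-- The recurrence of the statement at `n = k + 1`; at `k = 0` the junk value `u (0 - 1) = u 0`
is multiplied by `0`. -/
def SatisfiesRecurrence (u : ℕ → R) : Prop :=
  ∀ k : ℕ, ((k : R) + 1) * u (k + 1) =
    2 * (2 * k + 1) * ((k + 1) * k - b) * u k - 4 * c * k * u (k - 1)

theorem SatisfiesRecurrence.sum_antidiagonal_natCast_mul (hrec : SatisfiesRecurrence b c u)
    (n : ℕ) :
    ∑ p ∈ antidiagonal (n + 2), (p.1 : R) * (u p.1 * u p.2) =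
      ∑ p ∈ antidiagonal (n + 1),
          2 * (2 * (p.1 : R) + 1) * ((p.1 + 1) * p.1 - b) * (u p.1 * u p.2)
        - 4 * c * ∑ p ∈ antidiagonal n, ((p.1 : R) + 1) * (u p.1 * u p.2) := by
  calc ∑ p ∈ antidiagonal (n + 2), (p.1 : R) * (u p.1 * u p.2)
      = ∑ p ∈ antidiagonal (n + 1), ((p.1 : R) + 1) * u (p.1 + 1) * u p.2 := by
        rw [sum_antidiagonal_succ]
        simp only [Nat.cast_zero, zero_mul, zero_add, Nat.cast_add_one, mul_assoc]
    _ = ∑ p ∈ antidiagonal (n + 1),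
          (2 * (2 * (p.1 : R) + 1) * ((p.1 + 1) * p.1 - b) * (u p.1 * u p.2)
            - 4 * c * ((p.1 : R) * (u (p.1 - 1) * u p.2))) :=
        sum_congr rfl fun p _ => by rw [hrec]; ring
    _ = _ := by
        rw [sum_sub_distrib, ← mul_sum,
          sum_antidiagonal_succ (f := fun p => (p.1 : R) * (u (p.1 - 1) * u p.2))]
        simp only [Nat.cast_zero, zero_mul, zero_add, Nat.cast_add_one, Nat.add_sub_cancel]

theorem SatisfiesRecurrence.sum_antidiagonal_mul_add_two [IsDomain R] [CharZero R]
    (hrec : SatisfiesRecurrence b c u) (n : ℕ) :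
    ∑ p ∈ antidiagonal (n + 2), u p.1 * u p.2 =
      4 * ∑ p ∈ antidiagonal (n + 1),
          ((p.1 : R) ^ 2 - p.1 * p.2 + p.2 ^ 2 + p.1 - b) * (u p.1 * u p.2)
        - 4 * c * ∑ p ∈ antidiagonal n, u p.1 * u p.2 := by
  -- Multiplied by `n + 2 = i + j`, the left side becomes `2 ∑ i uᵢ uⱼ` by symmetry, and `i uᵢ` is
  -- given by the recurrence; both sides then agree after symmetrizing the weights.
  have hn : (n : R) + 2 ≠ 0 := by exact_mod_cast (n + 1).succ_ne_zero
  have symm_left : (n + 2 : R) * ∑ p ∈ antidiagonal (n + 2), u p.1 * u p.2 =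
      2 * ∑ p ∈ antidiagonal (n + 2), (p.1 : R) * (u p.1 * u p.2) := by
    simp only [mul_sum]
    convert sum_antidiagonal_mul_eq_of_add_swap_eq (n := n + 2) (f := fun _ _ => (n + 2 : R))
      (g := fun i _ => 2 * (i : R)) u ?_ using 2
    · ring
    intro i j h
    have hij : (i : R) + j = n + 2 := by exact_mod_cast h
    linear_combination (-2 : R) * hij
  have symm_middle : (n + 2 : R) * (4 * ∑ p ∈ antidiagonal (n + 1),
        ((p.1 : R) ^ 2 - p.1 * p.2 + p.2 ^ 2 + p.1 - b) * (u p.1 * u p.2)) =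
      2 * ∑ p ∈ antidiagonal (n + 1),
        2 * (2 * (p.1 : R) + 1) * ((p.1 + 1) * p.1 - b) * (u p.1 * u p.2) := by
    simp only [mul_sum]
    convert sum_antidiagonal_mul_eq_of_add_swap_eq (n := n + 1)
      (f := fun i j => (n + 2 : R) * 4 * ((i : R) ^ 2 - i * j + j ^ 2 + i - b))
      (g := fun i _ => 2 * 2 * (2 * (i : R) + 1) * ((i + 1) * i - b)) u ?_ using 2
    · ring
    · ring
    intro i j h
    have hij : (i : R) + j = n + 1 := by exact_mod_cast h
    linear_combination -4 * (2 * ((i : R) ^ 2 - i * j + j ^ 2) + i + j - 2 * b) * hij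
  have symm_right : 2 * ∑ p ∈ antidiagonal n, ((p.1 : R) + 1) * (u p.1 * u p.2) =
      (n + 2 : R) * ∑ p ∈ antidiagonal n, u p.1 * u p.2 := by
    simp only [mul_sum]
    convert sum_antidiagonal_mul_eq_of_add_swap_eq (n := n) (f := fun i _ => 2 * ((i : R) + 1))
      (g := fun _ _ => (n + 2 : R)) u ?_ using 2
    · ring
    intro i j h
    have hij : (i : R) + j = n := by exact_mod_cast h
    linear_combination 2 * hij
  apply mul_left_cancel₀ hn
  linear_combination symm_left + 2 * hrec.sum_antidiagonal_natCast_mul n - symm_middle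
    - 4 * c * symm_right

theorem SatisfiesRecurrence.exists_eq_two_mul [IsDomain R] [CharZero R]
    (hrec : SatisfiesRecurrence b c u) (hu0 : u 0 = 1) {S : Subring R} (hb : b ∈ S) (hc : c ∈ S)
    (n : ℕ) : ∃ s ∈ S, u (n + 1) = 2 * s := by
  induction n using Nat.strong_induction_on with
  | _ n ih =>
  rcases n with _ | n
  · refine ⟨-b, neg_mem hb, ?_⟩
    have hu1 := hrec 0
    norm_num at hu1
    linear_combination hu1 - 2 * b * hu0
  choose! w hwS hw using fun k (hk : k ≤ n) => ih k (Nat.lt_succ_of_le hk)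
  have hmem : ∀ k ≤ n + 1, u k ∈ S := by
    rintro (_ | k) hk
    · exact hu0 ▸ one_mem S
    · exact hw k (by omega) ▸ mul_mem (ofNat_mem S 2) (hwS k (by omega))
  have hpeel : ∑ p ∈ antidiagonal (n + 2), u p.1 * u p.2 =
      2 * u (n + 2) + 4 * ∑ p ∈ antidiagonal n, w p.1 * w p.2 := by
    rw [sum_antidiagonal_add_two, hu0, one_mul, mul_sum]
    congr 1
    refine sum_congr rfl fun p hp => ?_
    rw [hw _ (antidiagonal.fst_le hp), hw _ (antidiagonal.snd_le hp)]
    ring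
  refine ⟨∑ p ∈ antidiagonal (n + 1),
        ((p.1 : R) ^ 2 - p.1 * p.2 + p.2 ^ 2 + p.1 - b) * (u p.1 * u p.2)
      - c * ∑ p ∈ antidiagonal n, u p.1 * u p.2 - ∑ p ∈ antidiagonal n, w p.1 * w p.2, ?_, ?_⟩
  · refine sub_mem (sub_mem (sum_mem fun p hp => mul_mem ?_ (mul_mem_of_mem_antidiagonal hmem hp))
      (mul_mem hc (sum_mem fun p hp => mul_mem_of_mem_antidiagonal
        (fun k hk => hmem k (hk.trans n.le_succ)) hp)))
      (sum_mem fun p hp => mul_mem_of_mem_antidiagonal hwS hp)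
    apply_rules [sub_mem, add_mem, mul_mem, pow_mem, natCast_mem]
  · apply mul_left_cancel₀ (two_ne_zero (α := R))
    linear_combination hrec.sum_antidiagonal_mul_add_two n - hpeel

theorem SatisfiesRecurrence.mem_subring [IsDomain R] [CharZero R]
    (hrec : SatisfiesRecurrence b c u) (hu0 : u 0 = 1) {S : Subring R} (hb : b ∈ S) (hc : c ∈ S) :
    ∀ n, u n ∈ S
  | 0 => hu0 ▸ one_mem S
  | n + 1 => by
    obtain ⟨s, hs, hus⟩ := hrec.exists_eq_two_mul hu0 hb hc n
    exact hus ▸ mul_mem (ofNat_mem S 2) hs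

end Recurrence

/-- Let `b`, `c` be indeterminates over `ℚ`.  The sequence `u n ∈ ℚ[b,c]` defined by
`u 0 = 1`, `u (-1) = 0` and `n·uₙ = 2(2n-1)(n(n-1)-b)·u_{n-1} - 4c(n-1)·u_{n-2}`
consists of polynomials with integer coefficients. -/
theorem statement0
    (b c : MvPolynomial (Fin 2) ℚ) (hb : b = MvPolynomial.X 0) (hc : c = MvPolynomial.X 1)
    (u : ℕ → MvPolynomial (Fin 2) ℚ)
    (hu0 : u 0 = 1)
    (hurec : ∀ n : ℕ, 1 ≤ n →
      (n : MvPolynomial (Fin 2) ℚ) * u n =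
        2 * (2 * (n : MvPolynomial (Fin 2) ℚ) - 1) *
            ((n : MvPolynomial (Fin 2) ℚ) * ((n : MvPolynomial (Fin 2) ℚ) - 1) - b) * u (n - 1)
          - 4 * c * ((n : MvPolynomial (Fin 2) ℚ) - 1) *
            (if 2 ≤ n then u (n - 2) else 0)) :
    ∀ n : ℕ, ∃ v : MvPolynomial (Fin 2) ℤ,
      MvPolynomial.map (Int.castRingHom ℚ) v = u n := by
  have hrec : SatisfiesRecurrence b c u := by
    intro k
    have h := hurec (k + 1) k.succ_pos
    rcases k with _ | k
    · norm_num at h ⊢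
      linear_combination h
    · rw [if_pos (by omega), Nat.add_sub_cancel, show k + 1 + 1 - 2 = k from rfl] at h
      push_cast at h ⊢
      linear_combination h
  let S := (MvPolynomial.map (Int.castRingHom ℚ) : MvPolynomial (Fin 2) ℤ →+* _).range
  have hbS : b ∈ S := ⟨MvPolynomial.X 0, by rw [hb, MvPolynomial.map_X]⟩
  have hcS : c ∈ S := ⟨MvPolynomial.X 1, by rw [hc, MvPolynomial.map_X]⟩
  exact hrec.mem_subring hu0 hbS hcS
end

section
/- For all n ≥ 0 the element u_n lies in R[1/2], the subring of K generated by the image of R and the element 1/2. -/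
/-!
Put `S n = ∑_{a+b=n} u_a u_b`. By symmetry `n S n = 2 ∑_{a+b=n} a u_a u_b`; substituting the
recursion for `a u_a` and symmetrizing once more gives
`n S n = ∑_{i+j+b=n} (p_i(j + i/2) + p_i(b + i/2)) u_j u_b`.
As `p_i` is odd, `p_i(x) + p_i(y)` is divisible by `x + y = n` in `R[1/2]`, so `S n ∈ R[1/2]` once
all `u_j` with `j < n` are; and `S n = 2 u_n + ∑_{0<a<n} u_a u_{n-a}` because `u_0 = 1`.
-/

open Polynomial Finset

namespace Polynomial

variable {R S : Type*} [CommRing R] [CommRing S] [Algebra R S] {f : R[X]}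

theorem aeval_neg_of_coeff_even_eq_zero (hf : ∀ k, f.coeff (2 * k) = 0) (x : S) :
    aeval (-x) f = -aeval x f := by
  rw [aeval_eq_sum_range, aeval_eq_sum_range, ← sum_neg_distrib]
  refine sum_congr rfl fun k _ => ?_
  rcases Nat.even_or_odd k with ⟨m, rfl⟩ | hk
  · simp [← two_mul, hf m]
  · rw [hk.neg_pow, smul_neg]

theorem add_dvd_aeval_add_aeval_of_coeff_even_eq_zero (hf : ∀ k, f.coeff (2 * k) = 0)
    (x y : S) : x + y ∣ aeval x f + aeval y f := by
  simpa [eval_map_algebraMap, aeval_neg_of_coeff_even_eq_zero hf] using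
    sub_dvd_eval_sub x (-y) (f.map (algebraMap R S))

theorem exists_mem_aeval_add_aeval_eq_mul_of_coeff_even_eq_zero
    (hf : ∀ k, f.coeff (2 * k) = 0) {A : Subalgebra R S} {x y : S} (hx : x ∈ A) (hy : y ∈ A) :
    ∃ c ∈ A, aeval x f + aeval y f = (x + y) * c := by
  obtain ⟨c, hc⟩ := add_dvd_aeval_add_aeval_of_coeff_even_eq_zero hf (⟨x, hx⟩ : A) ⟨y, hy⟩
  exact ⟨c, c.2, by simpa using congrArg Subtype.val hc⟩

end Polynomial

section Convolution

variable {M : Type*} [AddCommMonoid M]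

theorem sum_antidiagonal_sum_antidiagonal_fst (f : ℕ → ℕ → ℕ → M) (n : ℕ) :
    ∑ x ∈ antidiagonal n, ∑ y ∈ antidiagonal x.1, f y.1 y.2 x.2 =
      ∑ x ∈ antidiagonal n, ∑ y ∈ antidiagonal x.2, f x.1 y.1 y.2 := by
  rw [sum_sigma', sum_sigma']
  refine sum_nbij' (fun z => ⟨(z.2.1, z.2.2 + z.1.2), (z.2.2, z.1.2)⟩)
    (fun z => ⟨(z.1.1 + z.2.1, z.2.2), (z.1.1, z.2.1)⟩) ?_ ?_ ?_ ?_ (fun _ _ => rfl) <;>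
  · rintro ⟨⟨a, b⟩, ⟨c, d⟩⟩ h
    simp only [mem_sigma, HasAntidiagonal.mem_antidiagonal, and_true] at h ⊢
    first | omega | (obtain ⟨-, rfl⟩ := h; rfl)

theorem sum_Icc_one_eq_sum_antidiagonal (f : ℕ → ℕ → M) {a : ℕ} (hf : f 0 a = 0) :
    ∑ i ∈ Icc 1 a, f i (a - i) = ∑ x ∈ antidiagonal a, f x.1 x.2 := by
  rw [Nat.sum_antidiagonal_eq_sum_range_succ f]
  refine sum_subset (fun i hi => ?_) fun i hi hi' => ?_
  · simp only [mem_Icc, mem_range] at hi ⊢; omega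
  obtain rfl : i = 0 := by simp only [mem_Icc, mem_range, not_and, not_le] at hi hi'; omega
  exact hf

variable {K : Type*} [CommSemiring K]

theorem natCast_mul_sum_antidiagonal_mul (u : ℕ → K) (n : ℕ) :
    (n : K) * ∑ x ∈ antidiagonal n, u x.1 * u x.2 =
      2 * ∑ x ∈ antidiagonal n, (x.1 : K) * (u x.1 * u x.2) := by
  have hswap : ∑ x ∈ antidiagonal n, (x.2 : K) * (u x.1 * u x.2) =
      ∑ x ∈ antidiagonal n, (x.1 : K) * (u x.1 * u x.2) := by
    rw [← Nat.sum_antidiagonal_swap]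
    exact sum_congr rfl fun x _ => by simp only [Prod.fst_swap, Prod.snd_swap, mul_comm (u x.2)]
  calc (n : K) * ∑ x ∈ antidiagonal n, u x.1 * u x.2
      = ∑ x ∈ antidiagonal n, ((x.1 : K) + x.2) * (u x.1 * u x.2) := by
        rw [mul_sum]
        refine sum_congr rfl fun x hx => ?_
        rw [← HasAntidiagonal.mem_antidiagonal.mp hx, Nat.cast_add]
    _ = _ := by
        rw [two_mul]
        nth_rewrite 2 [← hswap]
        rw [← sum_add_distrib]
        simp only [add_mul]

theorem natCast_mul_sum_antidiagonal_mul_eq_of_recursion (u : ℕ → K) (q : ℕ → ℕ → K)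
    (hrec : ∀ a : ℕ, (a : K) * u a = ∑ y ∈ antidiagonal a, q y.1 y.2 * u y.2) (n : ℕ) :
    (n : K) * ∑ x ∈ antidiagonal n, u x.1 * u x.2 =
      ∑ x ∈ antidiagonal n, ∑ y ∈ antidiagonal x.2,
        (q x.1 y.1 + q x.1 y.2) * (u y.1 * u y.2) := by
  calc (n : K) * ∑ x ∈ antidiagonal n, u x.1 * u x.2
      = 2 * ∑ x ∈ antidiagonal n, ∑ y ∈ antidiagonal x.1, q y.1 y.2 * u y.2 * u x.2 := by
        simp_rw [natCast_mul_sum_antidiagonal_mul, ← mul_assoc, hrec, sum_mul]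
    _ = 2 * ∑ x ∈ antidiagonal n, ∑ y ∈ antidiagonal x.2, q x.1 y.1 * (u y.1 * u y.2) := by
        simp_rw [sum_antidiagonal_sum_antidiagonal_fst (fun i j b => q i j * u j * u b),
          mul_assoc]
    _ = _ := by
        rw [mul_sum]
        refine sum_congr rfl fun x _ => ?_
        rw [two_mul]
        nth_rewrite 2 [← Nat.sum_antidiagonal_swap]
        rw [← sum_add_distrib]
        exact sum_congr rfl fun y _ => by simp only [Prod.fst_swap, Prod.snd_swap]; ring

end Convolution

theorem mem_of_sum_antidiagonal_mul_mem {K S : Type*} [Field K] [CharZero K] [SetLike S K]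
    [SubringClass S K] {A : S} (h2 : (2 : K)⁻¹ ∈ A) {u : ℕ → K} (hu0 : u 0 = 1) {n : ℕ}
    (hn : n ≠ 0) (hlt : ∀ j < n, u j ∈ A) (hS : ∑ x ∈ antidiagonal n, u x.1 * u x.2 ∈ A) :
    u n ∈ A := by
  obtain ⟨m, rfl⟩ := Nat.exists_eq_add_one_of_ne_zero hn
  set mid := ∑ k ∈ range m, u (k + 1) * u (m - k)
  have hmid : mid ∈ A := sum_mem fun k hk => by
    have := mem_range.mp hk
    exact mul_mem (hlt _ (by omega)) (hlt _ (by omega))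
  have hsplit : ∑ x ∈ antidiagonal (m + 1), u x.1 * u x.2 = mid + 2 * u (m + 1) := by
    rw [Nat.sum_antidiagonal_eq_sum_range_succ (fun i j => u i * u j), sum_range_succ',
      sum_range_succ]
    simp only [Nat.reduceSubDiff, tsub_self, hu0, mul_one, tsub_zero, one_mul, mid]
    ring
  have : u (m + 1) = 2⁻¹ * (∑ x ∈ antidiagonal (m + 1), u x.1 * u x.2 - mid) := by
    rw [hsplit]; field_simp; ring
  rw [this]
  exact mul_mem h2 (sub_mem hS hmid)

section HalfIntegerShift

variable {R K : Type*} [CommRing R] [Field K] [CharZero K] [Algebra R K]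

/-- Setting `p 0`, which the recursion never uses, to `0` lets the sum run over the whole
antidiagonal. -/
theorem natCast_mul_eq_sum_antidiagonal {p : ℕ → R[X]} {u : ℕ → K}
    (hrec : ∀ n : ℕ, 1 ≤ n →
      (n : K) * u n = ∑ i ∈ Icc 1 n, aeval ((n : K) - (i : K) / 2) (p i) * u (n - i))
    (a : ℕ) :
    (a : K) * u a =
      ∑ y ∈ antidiagonal a, aeval ((y.2 : K) + y.1 / 2) (Function.update p 0 0 y.1) * u y.2 := by
  rw [← sum_Icc_one_eq_sum_antidiagonal
    (fun i j => aeval ((j : K) + i / 2) (Function.update p 0 0 i) * u j) (by simp)]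
  rcases Nat.eq_zero_or_pos a with rfl | ha
  · simp
  refine (hrec a ha).trans (sum_congr rfl fun i hi => ?_)
  obtain ⟨hi1, hia⟩ := mem_Icc.mp hi
  rw [Function.update_of_ne (Nat.one_le_iff_ne_zero.mp hi1), Nat.cast_sub hia,
    show (a - i + i / 2 : K) = a - i / 2 by field_simp; ring]

theorem exists_mem_aeval_add_aeval_eq_natCast_mul {A : Subalgebra R K} (h2 : (2 : K)⁻¹ ∈ A)
    {f : R[X]} (hf : ∀ k, f.coeff (2 * k) = 0) (i j b : ℕ) :
    ∃ c ∈ A, aeval ((j : K) + i / 2) f + aeval ((b : K) + i / 2) f = ((i + j + b : ℕ) : K) * c := by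
  have hA : ∀ m : ℕ, (m : K) + i / 2 ∈ A := fun m => by
    rw [div_eq_mul_inv]
    exact add_mem (natCast_mem A m) (mul_mem (natCast_mem A i) h2)
  obtain ⟨c, hc, hfc⟩ := exists_mem_aeval_add_aeval_eq_mul_of_coeff_even_eq_zero hf (hA j) (hA b)
  refine ⟨c, hc, hfc.trans ?_⟩
  push_cast
  field_simp
  ring

theorem sum_antidiagonal_mul_mem {A : Subalgebra R K} (h2 : (2 : K)⁻¹ ∈ A) {p : ℕ → R[X]}
    (hodd : ∀ i, 1 ≤ i → ∀ k : ℕ, (p i).coeff (2 * k) = 0) {u : ℕ → K}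
    (hrec : ∀ a : ℕ, (a : K) * u a =
      ∑ y ∈ antidiagonal a, aeval ((y.2 : K) + y.1 / 2) (Function.update p 0 0 y.1) * u y.2)
    {n : ℕ} (hn : n ≠ 0) (hlt : ∀ j < n, u j ∈ A) :
    ∑ x ∈ antidiagonal n, u x.1 * u x.2 ∈ A := by
  set q : ℕ → ℕ → K := fun i j => aeval ((j : K) + i / 2) (Function.update p 0 0 i)
  have hn' : (n : K) ≠ 0 := Nat.cast_ne_zero.mpr hn
  have hterm : ∀ x ∈ antidiagonal n, ∀ y ∈ antidiagonal x.2,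
      (n : K)⁻¹ * ((q x.1 y.1 + q x.1 y.2) * (u y.1 * u y.2)) ∈ A := by
    rintro ⟨i, c⟩ hx ⟨j, b⟩ hy
    rw [HasAntidiagonal.mem_antidiagonal] at hx hy
    rcases eq_or_ne i 0 with rfl | hi
    · simp [q]
    obtain ⟨e, he, hqe⟩ := exists_mem_aeval_add_aeval_eq_natCast_mul h2
      (hodd i (Nat.one_le_iff_ne_zero.mpr hi)) i j b
    have hijb : i + j + b = n := by omega
    rw [← Function.update_of_ne hi 0 p, hijb] at hqe
    rw [hqe, mul_assoc, inv_mul_cancel_left₀ hn']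
    exact mul_mem he (mul_mem (hlt j (by omega)) (hlt b (by omega)))
  rw [← inv_mul_cancel_left₀ hn' (∑ x ∈ antidiagonal n, u x.1 * u x.2),
    natCast_mul_sum_antidiagonal_mul_eq_of_recursion u q hrec, mul_sum]
  simp_rw [mul_sum]
  exact sum_mem fun x hx => sum_mem fun y hy => hterm x hx y hy

end HalfIntegerShift

theorem statement1_general
    (R : Type*) [CommRing R] [CharZero R]
    (K : Type*) [Field K] [Algebra R K] [IsFractionRing R K]
    (p : ℕ → Polynomial R)
    (hodd : ∀ i, 1 ≤ i → ∀ k : ℕ, (p i).coeff (2 * k) = 0)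
    (u : ℕ → K)
    (hu0 : u 0 = 1)
    (hurec : ∀ n : ℕ, 1 ≤ n →
      (n : K) * u n =
        ∑ i ∈ Finset.Icc 1 n,
          Polynomial.aeval ((n : K) - (i : K) / 2) (p i) * u (n - i)) :
    ∀ n : ℕ, u n ∈ Algebra.adjoin R {(2 : K)⁻¹} := by
  have : CharZero K := charZero_of_injective_algebraMap (IsFractionRing.injective R K)
  have h2 : (2 : K)⁻¹ ∈ Algebra.adjoin R {(2 : K)⁻¹} := Algebra.self_mem_adjoin_singleton R _
  have hrec := natCast_mul_eq_sum_antidiagonal hurec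
  intro n
  induction n using Nat.strong_induction_on with | _ n ih
  rcases eq_or_ne n 0 with rfl | hn
  · rw [hu0]; exact one_mem _
  exact mem_of_sum_antidiagonal_mul_mem h2 hu0 hn ih (sum_antidiagonal_mul_mem h2 hodd hrec hn ih)

/-- Let `R` be an integral domain of characteristic zero with fraction field `K`,
and let `p i ∈ t·R[t²]` (`i ≥ 1`) be odd polynomials with coefficients in `R`
(i.e. all even-degree coefficients vanish).  If `u : ℕ → K` satisfies `u 0 = 1` and
`n·uₙ = ∑_{i=1}^{n} pᵢ(n - i/2)·u_{n-i}` for `n ≥ 1`, then every `u n` lies in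
`R[1/2]`, the `R`-subalgebra of `K` generated by `1/2`. -/
theorem statement1
    (R : Type*) [CommRing R] [IsDomain R] [CharZero R]
    (K : Type*) [Field K] [Algebra R K] [IsFractionRing R K]
    (p : ℕ → Polynomial R)
    (hodd : ∀ i, 1 ≤ i → ∀ k : ℕ, (p i).coeff (2 * k) = 0)
    (u : ℕ → K)
    (hu0 : u 0 = 1)
    (hurec : ∀ n : ℕ, 1 ≤ n →
      (n : K) * u n =
        ∑ i ∈ Finset.Icc 1 n,
          Polynomial.aeval ((n : K) - (i : K) / 2) (p i) * u (n - i)) :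
    ∀ n : ℕ, u n ∈ Algebra.adjoin R {(2 : K)⁻¹} :=
  statement1_general R K p hodd u hu0 hurec
end

section
/- In the formal power series ring ℚ[β][[t]] the identity (Σ_{n≥0} (1/2+β)_n (1/2-β)_n t^n / n!) · (Σ_{n≥0} (1/2+β)_n (1/2-β)_n (-1)^n t^n / n!) = Σ_{n≥0} (1/2+β)_n (1/2-β)_n · C(2n,n) · t^{2n} holds, where (a)_n = a(a+1)⋯(a+n-1) denotes the Pochhammer symbol (rising factorial) and C(2n,n) is the central binomial coefficient. -/
/-!
Put `a n = (1/2+β)ₙ (1/2-β)ₙ / n!`, so that `(n+1) a (n+1) = (Q + n(n+1)) a n` with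
`Q = 1/4 - β²`. The `m`-th coefficient of the product is `M₀(m)`, where
`Mₖ(m) = ∑_{i+j=m} (i-j)ᵏ aᵢ (-1)ʲ aⱼ`; it vanishes for odd `m` by the symmetry `i ↔ j`.
Writing a weight as `i φ + j ψ` and absorbing the factors `i`, `j` into `aᵢ`, `aⱼ` through the
recurrence lowers `m` by one. Suitable weights give
`M₀(m+1) = M₁(m)`, `2 M₁(m+1) = M₂(m) + (m² + 2m + 4Q) M₀(m)` and
`(m+3) M₂(m+1) = (m+1)((m+1)(m+3) + 4Q) M₁(m)`, which combine into
`(n+1) M₀(2n+2) = 2(2n+1)(Q + n(n+1)) M₀(2n)`, the recurrence of `C(2n,n) n! aₙ`.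
-/

open Finset Polynomial

section AlternatingMoments

variable {R : Type*} [CommRing R]

theorem sum_antidiagonal_succ_weighted_of_rec {α β a b : ℕ → R}
    (ha : ∀ n : ℕ, (n + 1 : R) * a (n + 1) = α n * a n)
    (hb : ∀ n : ℕ, (n + 1 : R) * b (n + 1) = β n * b n) (φ ψ : ℕ → ℕ → R) (m : ℕ) :
    ∑ p ∈ antidiagonal (m + 1), ((p.1 : R) * φ p.1 p.2 + p.2 * ψ p.1 p.2) * (a p.1 * b p.2) =
      ∑ p ∈ antidiagonal m,
        (α p.1 * φ (p.1 + 1) p.2 + β p.2 * ψ p.1 (p.2 + 1)) * (a p.1 * b p.2) := by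
  simp only [add_mul, sum_add_distrib]
  rw [Nat.sum_antidiagonal_succ, Nat.sum_antidiagonal_succ']
  simp only [Nat.cast_zero, zero_mul, zero_add, Nat.cast_add_one]
  congr 1 <;> refine sum_congr rfl fun p _ => ?_
  · linear_combination (φ (p.1 + 1) p.2 * b p.2) * ha p.1
  · linear_combination (ψ p.1 (p.2 + 1) * a p.1) * hb p.2

def altMoment (a : ℕ → R) (k m : ℕ) : R :=
  ∑ p ∈ antidiagonal m, ((p.1 : R) - p.2) ^ k * (a p.1 * ((-1) ^ p.2 * a p.2))

theorem altMoment_zero_eq_coeff (a : ℕ → R) (m : ℕ) :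
    altMoment a 0 m =
      PowerSeries.coeff m (PowerSeries.mk a * PowerSeries.mk fun n => (-1) ^ n * a n) := by
  simp only [altMoment, pow_zero, one_mul, PowerSeries.coeff_mul, PowerSeries.coeff_mk]

theorem altMoment_zero_of_odd [IsDomain R] [CharZero R] {a : ℕ → R} {m : ℕ} (hm : Odd m) :
    altMoment a 0 m = 0 := by
  have h_anti : altMoment a 0 m = -altMoment a 0 m := by
    rw [altMoment, ← sum_neg_distrib, ← Nat.sum_antidiagonal_swap]
    refine sum_congr rfl fun p hp => ?_
    have h_odd : (-1 : R) ^ p.1 * (-1) ^ p.2 = -1 := by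
      rw [← pow_add, mem_antidiagonal.mp hp, hm.neg_one_pow]
    have h_even : (-1 : R) ^ p.2 * (-1) ^ p.2 = 1 := by
      rw [← pow_add, Even.neg_one_pow ⟨p.2, rfl⟩]
    simp only [Prod.fst_swap, Prod.snd_swap, pow_zero, one_mul]
    linear_combination
      (a p.1 * a p.2 * (-1) ^ p.2) * h_odd - (a p.1 * a p.2 * (-1) ^ p.1) * h_even
  have h_two : (2 : R) * altMoment a 0 m = 0 := by linear_combination h_anti
  exact (mul_eq_zero.mp h_two).resolve_left two_ne_zero

variable {Q : R} {a : ℕ → R}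
  (ha : ∀ n : ℕ, (n + 1 : R) * a (n + 1) = (Q + n * (n + 1)) * a n)
include ha

theorem altMoment_shift (φ ψ : ℕ → ℕ → R) (m : ℕ) :
    ∑ p ∈ antidiagonal (m + 1),
        ((p.1 : R) * φ p.1 p.2 + p.2 * ψ p.1 p.2) * (a p.1 * ((-1) ^ p.2 * a p.2)) =
      ∑ p ∈ antidiagonal m,
        ((Q + p.1 * (p.1 + 1)) * φ (p.1 + 1) p.2 - (Q + p.2 * (p.2 + 1)) * ψ p.1 (p.2 + 1)) *
          (a p.1 * ((-1) ^ p.2 * a p.2)) := by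
  have hb (n : ℕ) :
      (n + 1 : R) * ((-1) ^ (n + 1) * a (n + 1)) = -(Q + n * (n + 1)) * ((-1) ^ n * a n) := by
    linear_combination (-(-1 : R) ^ n) * ha n
  refine (sum_antidiagonal_succ_weighted_of_rec (b := fun n => (-1) ^ n * a n) ha hb φ ψ m).trans
    (sum_congr rfl fun p _ => ?_)
  ring

theorem altMoment_one_succ (m : ℕ) :
    2 * altMoment a 1 (m + 1) = altMoment a 2 m + (m ^ 2 + 2 * m + 4 * Q) * altMoment a 0 m :=
  calc 2 * altMoment a 1 (m + 1)
      = ∑ p ∈ antidiagonal (m + 1),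
          ((p.1 : R) * 2 + p.2 * (-2)) * (a p.1 * ((-1) ^ p.2 * a p.2)) := by
        rw [altMoment, mul_sum]
        refine sum_congr rfl fun p _ => ?_
        ring
    _ = _ := altMoment_shift ha (fun _ _ => 2) (fun _ _ => -2) m
    _ = altMoment a 2 m + (m ^ 2 + 2 * m + 4 * Q) * altMoment a 0 m := by
        rw [altMoment, altMoment, mul_sum, ← sum_add_distrib]
        refine sum_congr rfl fun p hp => ?_
        rw [← mem_antidiagonal.mp hp]
        push_cast
        ring

theorem altMoment_two_succ (m : ℕ) :
    (m + 3 : R) * altMoment a 2 (m + 1) =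
      (m + 1) * ((m + 1) * (m + 3) + 4 * Q) * altMoment a 1 m :=
  calc (m + 3 : R) * altMoment a 2 (m + 1)
      = ∑ p ∈ antidiagonal (m + 1),
          ((p.1 : R) * (2 * (m + 2) * (p.1 - p.2) - (p.1 - p.2) ^ 2)
            + p.2 * (-2 * (m + 2) * (p.1 - p.2) - (p.1 - p.2) ^ 2)) *
              (a p.1 * ((-1) ^ p.2 * a p.2)) := by
        rw [altMoment, mul_sum]
        refine sum_congr rfl fun p hp => ?_
        have hm : (m : R) = p.1 + p.2 - 1 := by
          rw [← Nat.cast_add, mem_antidiagonal.mp hp]; push_cast; ring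
        rw [hm]
        ring
    _ = _ := altMoment_shift ha
          (fun i j => 2 * (m + 2) * (i - j) - (i - j) ^ 2)
          (fun i j => -2 * (m + 2) * (i - j) - (i - j) ^ 2) m
    _ = (m + 1) * ((m + 1) * (m + 3) + 4 * Q) * altMoment a 1 m := by
        rw [altMoment, mul_sum]
        refine sum_congr rfl fun p hp => ?_
        rw [← mem_antidiagonal.mp hp]
        push_cast
        ring

variable [IsDomain R] [CharZero R]

theorem altMoment_zero_succ (m : ℕ) :
    altMoment a 0 (m + 1) = altMoment a 1 m := by
  refine mul_left_cancel₀ (Nat.cast_add_one_ne_zero (R := R) m) ?_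
  calc (m + 1 : R) * altMoment a 0 (m + 1)
      = ∑ p ∈ antidiagonal (m + 1),
          ((p.1 : R) * 1 + p.2 * 1) * (a p.1 * ((-1) ^ p.2 * a p.2)) := by
        rw [altMoment, mul_sum]
        refine sum_congr rfl fun p hp => ?_
        rw [← Nat.cast_add_one, ← mem_antidiagonal.mp hp]
        push_cast
        ring
    _ = _ := altMoment_shift ha (fun _ _ => 1) (fun _ _ => 1) m
    _ = (m + 1) * altMoment a 1 m := by
        rw [altMoment, mul_sum]
        refine sum_congr rfl fun p hp => ?_
        rw [← mem_antidiagonal.mp hp]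
        push_cast
        ring

theorem altMoment_two_mul (m : ℕ) :
    (m + 2 : R) * altMoment a 2 m = m * (m * (m + 2) + 4 * Q) * altMoment a 0 m := by
  cases m with
  | zero => simp [altMoment]
  | succ m =>
    rw [altMoment_zero_succ ha]
    push_cast
    linear_combination altMoment_two_succ ha m

theorem altMoment_zero_even_succ (n : ℕ) :
    (n + 1 : R) * altMoment a 0 (2 * (n + 1)) =
      2 * (2 * n + 1) * (Q + n * (n + 1)) * altMoment a 0 (2 * n) := by
  have hA := altMoment_zero_succ ha (2 * n + 1)
  have hB := altMoment_one_succ ha (2 * n)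
  have hC := altMoment_two_mul ha (2 * n)
  rw [show 2 * (n + 1) = 2 * n + 1 + 1 by ring]
  push_cast at hB hC
  refine mul_left_cancel₀ (show (4 : R) ≠ 0 by norm_num) ?_
  linear_combination (4 * n + 4) * hA + (2 * n + 2) * hB + hC

theorem altMoment_zero_even (n : ℕ) :
    altMoment a 0 (2 * n) = n.centralBinom * n.factorial * a 0 * a n := by
  induction n with
  | zero => simp [altMoment]
  | succ n ih =>
    have hbinom :
        ((n + 1 : ℕ) : R) * (n + 1).centralBinom = 2 * (2 * n + 1) * n.centralBinom := by
      exact_mod_cast Nat.succ_mul_centralBinom_succ n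
    refine mul_left_cancel₀ (Nat.cast_add_one_ne_zero n) ?_
    rw [altMoment_zero_even_succ ha, ih, Nat.factorial_succ]
    push_cast at hbinom ⊢
    linear_combination -(n.factorial * a 0 * (n + 1) * a (n + 1)) * hbinom
      - (2 * (2 * n + 1) * n.centralBinom * n.factorial * a 0) * ha n

theorem PowerSeries.mk_mul_mk_neg_one_pow_mul :
    PowerSeries.mk a * PowerSeries.mk (fun n => (-1) ^ n * a n) =
      PowerSeries.mk fun m =>
        if Even m then (m.choose (m / 2) : R) * (m / 2).factorial * a 0 * a (m / 2) else 0 := by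
  ext m
  rw [← altMoment_zero_eq_coeff, PowerSeries.coeff_mk]
  split_ifs with hm
  · obtain ⟨n, rfl⟩ := hm
    rw [← two_mul, altMoment_zero_even ha, Nat.mul_div_cancel_left n two_pos, Nat.centralBinom]
  · exact altMoment_zero_of_odd (Nat.not_even_iff_odd.mp hm)

end AlternatingMoments

theorem ascPochhammer_eval_mul_eval_succ {S : Type*} [CommRing S] {x y : S} (hxy : x + y = 1)
    (n : ℕ) :
    (ascPochhammer S (n + 1)).eval x * (ascPochhammer S (n + 1)).eval y =
      (x * y + n * (n + 1)) * ((ascPochhammer S n).eval x * (ascPochhammer S n).eval y) := by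
  rw [ascPochhammer_succ_eval, ascPochhammer_succ_eval]
  linear_combination (n * (ascPochhammer S n).eval x * (ascPochhammer S n).eval y) * hxy

theorem natCast_add_one_mul_inv_factorial_mul {S : Type*} [CommRing S] [Algebra ℚ S]
    {α P : ℕ → S} (hP : ∀ n, P (n + 1) = α n * P n) (n : ℕ) :
    (n + 1 : S) * (algebraMap ℚ S ((n + 1).factorial : ℚ)⁻¹ * P (n + 1)) =
      α n * (algebraMap ℚ S (n.factorial : ℚ)⁻¹ * P n) := by
  have h : ((n : ℚ) + 1) * ((n + 1).factorial : ℚ)⁻¹ = (n.factorial : ℚ)⁻¹ := by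
    rw [Nat.factorial_succ]; push_cast; field_simp
  have h' := congrArg (algebraMap ℚ S) h
  rw [map_mul, map_add, map_one, map_natCast] at h'
  rw [hP]
  linear_combination (α n * P n) * h'

/-- The hypergeometric identity
`(∑ (1/2+β)ₙ(1/2-β)ₙ tⁿ/n!) · (∑ (1/2+β)ₙ(1/2-β)ₙ (-1)ⁿtⁿ/n!)
  = ∑ (1/2+β)ₙ(1/2-β)ₙ C(2n,n) t^{2n}`
in the formal power series ring `ℚ[β][[t]]`. -/
theorem statement3 :
    (PowerSeries.mk fun n : ℕ =>
        Polynomial.C ((n.factorial : ℚ)⁻¹) *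
          ((ascPochhammer (Polynomial ℚ) n).eval (Polynomial.C (1/2 : ℚ) + Polynomial.X) *
           (ascPochhammer (Polynomial ℚ) n).eval (Polynomial.C (1/2 : ℚ) - Polynomial.X))) *
    (PowerSeries.mk fun n : ℕ =>
        (-1 : Polynomial ℚ) ^ n * Polynomial.C ((n.factorial : ℚ)⁻¹) *
          ((ascPochhammer (Polynomial ℚ) n).eval (Polynomial.C (1/2 : ℚ) + Polynomial.X) *
           (ascPochhammer (Polynomial ℚ) n).eval (Polynomial.C (1/2 : ℚ) - Polynomial.X))) =
    PowerSeries.mk (fun m : ℕ =>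
        if Even m then
          (Nat.choose m (m / 2) : Polynomial ℚ) *
            ((ascPochhammer (Polynomial ℚ) (m / 2)).eval (Polynomial.C (1/2 : ℚ) + Polynomial.X) *
             (ascPochhammer (Polynomial ℚ) (m / 2)).eval (Polynomial.C (1/2 : ℚ) - Polynomial.X))
        else 0) := by
  set x : ℚ[X] := C (1 / 2) + X
  set y : ℚ[X] := C (1 / 2) - X
  have hxy : x + y = 1 := by
    rw [add_add_sub_cancel, ← C_add]; norm_num
  have hrec := natCast_add_one_mul_inv_factorial_mul
    (P := fun n => (ascPochhammer ℚ[X] n).eval x * (ascPochhammer ℚ[X] n).eval y)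
    (ascPochhammer_eval_mul_eval_succ hxy)
  rw [algebraMap_eq] at hrec
  set c : ℕ → ℚ[X] := fun n =>
    C (n.factorial : ℚ)⁻¹ * ((ascPochhammer ℚ[X] n).eval x * (ascPochhammer ℚ[X] n).eval y)
  have hc0 : c 0 = 1 := by simp [c]
  have hfac (n : ℕ) : (n.factorial : ℚ[X]) * c n =
      (ascPochhammer ℚ[X] n).eval x * (ascPochhammer ℚ[X] n).eval y := by
    rw [← mul_assoc, ← C_eq_natCast, ← C_mul, mul_inv_cancel₀ (by positivity), C_1, one_mul]
  calc _ = PowerSeries.mk c * PowerSeries.mk (fun n => (-1) ^ n * c n) := by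
        simp only [c, mul_assoc]
    _ = _ := PowerSeries.mk_mul_mk_neg_one_pow_mul hrec
    _ = _ := by
        congr 1
        funext m
        rw [hc0, mul_one, mul_assoc, hfac]
end

section
/- In the formal power series ring ℚ[b,c][[t]] the identity Σ_{n≥0} u_n t^{2n} = Σ_{k≥0} (-1)^k c^k t^{4k} · Σ_{n≥0} (-1)^n · n! · w_n · C(n+k,k) · C(2n+2k,n+k) · t^{2n} holds. -/
/-- The coefficient ring `ℚ[b,c]`. -/
abbrev Rbc : Type := MvPolynomial (Fin 2) ℚ

/-!
Write `D(n,k) = n! C(n+k,k) C(2n+2k,n+k) = (2n+2k)! / (k! (n+k)!)` and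
`v_m = ∑_{n+2k=m} (-1)^(n+k) c^k D(n,k) w_n`; the coefficient of `t^(2m)` on the right is `v_m` and
odd coefficients vanish on both sides. As `u` is determined by `u_0` and its recurrence, it suffices
to show that `v` satisfies that recurrence. The recurrence of `w` at `n+1` turns `((m+1)m - b) v_m`
into the single diagonal sum `∑_{n+2k=m+1} (-1)^(n+k) c^k n D(n-1,k) w_n`: the terms in `c w_(n-2)`
cancel against those of the shift `k ↦ k+1` because `D(n+2,k) = 2(k+1)(2n+2k+3) D(n,k+1)`.
What is left of the recurrence of `u` is, term by term, the contiguous relation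
`(n+2k+2) D(n,k+1) = 2(2n+4k+3) n D(n-1,k+1) + 4(n+2k+1) D(n,k)`, together with
`D(n+1,0) = 2(2n+1) D(n,0)` for the term with `k = 0`.
-/

open Nat Finset

def weight (n k : ℕ) : ℕ := n ! * (n + k).choose k * (2 * n + 2 * k).choose (n + k)

lemma weight_mul_factorial (n k : ℕ) : weight n k * (k ! * (n + k)!) = (2 * n + 2 * k)! := by
  have h := add_choose_mul_factorial_mul_factorial (n + k) (n + k)
  rw [show n + k + (n + k) = 2 * n + 2 * k by ring] at h
  rw [← h, ← add_choose_mul_factorial_mul_factorial n k, weight]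
  ring

lemma cast_weight (n k : ℕ) : (weight n k : ℚ) = (2 * n + 2 * k)! / (k ! * (n + k)!) := by
  rw [eq_div_iff (by positivity)]
  exact_mod_cast weight_mul_factorial n k

lemma weight_succ_zero (n : ℕ) : weight (n + 1) 0 = 2 * (2 * n + 1) * weight n 0 := by
  rw [← Nat.cast_inj (R := ℚ)]
  push_cast [cast_weight, mul_zero, add_zero, show 2 * (n + 1) = 2 * n + 1 + 1 by omega,
    factorial_succ]
  field_simp
  ring

lemma weight_add_two (n k : ℕ) :
    weight (n + 2) k = 2 * (k + 1) * (2 * n + 2 * k + 3) * weight n (k + 1) := by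
  rw [← Nat.cast_inj (R := ℚ)]
  push_cast [cast_weight, show 2 * (n + 2) + 2 * k = 2 * n + 2 * (k + 1) + 1 + 1 by omega,
    show n + 2 + k = n + (k + 1) + 1 by omega, factorial_succ]
  field_simp
  ring

lemma weight_succ_right (n k : ℕ) :
    (n + 2 * k + 2) * weight n (k + 1) =
      2 * (2 * n + 4 * k + 3) * n * weight (n - 1) (k + 1) + 4 * (n + 2 * k + 1) * weight n k := by
  rw [← Nat.cast_inj (R := ℚ)]
  rcases n with _ | n
  · push_cast [cast_weight, show 2 * 0 + 2 * (k + 1) = 2 * 0 + 2 * k + 1 + 1 by omega, zero_add,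
      factorial_succ]
    field_simp
    ring
  · push_cast [Nat.add_sub_cancel, cast_weight,
      show 2 * (n + 1) + 2 * (k + 1) = 2 * n + 2 * (k + 1) + 1 + 1 by omega,
      show 2 * (n + 1) + 2 * k = 2 * n + 2 * (k + 1) by omega,
      show n + 1 + (k + 1) = n + (k + 1) + 1 by omega, show n + 1 + k = n + (k + 1) by omega,
      factorial_succ]
    field_simp
    ring

section DiagSum

variable {M : Type*} [AddCommMonoid M]

def diagSum (f : ℕ → ℕ → M) (m : ℕ) : M := ∑ k ∈ range (m / 2 + 1), f (m - 2 * k) k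

lemma diagSum_add (f g : ℕ → ℕ → M) (m : ℕ) :
    diagSum (fun n k => f n k + g n k) m = diagSum f m + diagSum g m :=
  sum_add_distrib

lemma diagSum_congr {f g : ℕ → ℕ → M} {m : ℕ} (h : ∀ n k, n + 2 * k = m → f n k = g n k) :
    diagSum f m = diagSum g m :=
  sum_congr rfl fun k hk => h _ _ (by simp only [mem_range] at hk; omega)

lemma diagSum_add_two (f : ℕ → ℕ → M) (m : ℕ) :
    diagSum f (m + 2) = f (m + 2) 0 + diagSum (fun n k => f n (k + 1)) m := by
  rw [diagSum, show (m + 2) / 2 = m / 2 + 1 by omega, sum_range_succ', add_comm, diagSum]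
  congr 1
  exact sum_congr rfl fun k _ => by rw [show m + 2 - 2 * (k + 1) = m - 2 * k by omega]

lemma diagSum_succ_of_zero {f : ℕ → ℕ → M} (hf : ∀ k, f 0 k = 0) (m : ℕ) :
    diagSum f (m + 1) = diagSum (fun n k => f (n + 1) k) m := by
  obtain ⟨j, rfl | rfl⟩ := Nat.even_or_odd' m
  · rw [diagSum, diagSum, show (2 * j + 1) / 2 = 2 * j / 2 by omega]
    exact sum_congr rfl fun k hk => by
      simp only [mem_range] at hk
      rw [show 2 * j + 1 - 2 * k = 2 * j - 2 * k + 1 by omega]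
  · rw [diagSum, diagSum, show (2 * j + 1 + 1) / 2 = (2 * j + 1) / 2 + 1 by omega, sum_range_succ,
      show 2 * j + 1 + 1 - 2 * ((2 * j + 1) / 2 + 1) = 0 by omega, hf, add_zero]
    exact sum_congr rfl fun k hk => by
      simp only [mem_range] at hk
      rw [show 2 * j + 1 + 1 - 2 * k = 2 * j + 1 - 2 * k + 1 by omega]

lemma diagSum_add_eq_zero {f g : ℕ → ℕ → M} (hf₀ : ∀ k, f 0 k = 0) (hf₁ : ∀ k, f 1 k = 0)
    (hg : ∀ n, g n 0 = 0) (hfg : ∀ n k, f (n + 2) k + g n (k + 1) = 0) (m : ℕ) :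
    diagSum f m + diagSum g m = 0 := by
  match m with
  | 0 => simp [diagSum, hf₀, hg]
  | 1 => simp [diagSum, hf₁, hg]
  | m + 2 =>
    rw [diagSum_succ_of_zero hf₀, diagSum_succ_of_zero hf₁, diagSum_add_two, hg, zero_add,
      ← diagSum_add]
    exact sum_eq_zero fun k _ => hfg _ _

lemma sum_sum_ite_eq_diagSum (f : ℕ → ℕ → M) (m : ℕ) :
    ∑ k ∈ range (m + 1), ∑ n ∈ range (m + 1), (if 4 * k + 2 * n = m then f n k else 0) =
      if Even m then diagSum f (m / 2) else 0 := by
  split_ifs with hm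
  · obtain ⟨j, rfl⟩ := hm
    have inner : ∀ k, ∑ n ∈ range (j + j + 1), (if 4 * k + 2 * n = j + j then f n k else 0) =
        if 2 * k ≤ j then f (j - 2 * k) k else 0 := fun k => by
      split_ifs with hk
      · rw [sum_eq_single_of_mem (j - 2 * k) (mem_range.2 (by omega))
          fun n _ hn => if_neg (by omega), if_pos (by omega)]
      · exact sum_eq_zero fun n _ => if_neg (by omega)
    rw [sum_congr rfl fun k _ => inner k, ← sum_filter, diagSum, show (j + j) / 2 = j by omega]
    congr 1
    ext k
    simp only [mem_filter, mem_range]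
    omega
  · exact sum_eq_zero fun k _ => sum_eq_zero fun n _ => if_neg fun h => hm ⟨n + 2 * k, by omega⟩

lemma mul_diagSum {R : Type*} [NonUnitalNonAssocSemiring R] (a : R) (f : ℕ → ℕ → R) (m : ℕ) :
    a * diagSum f m = diagSum (fun n k => a * f n k) m :=
  mul_sum _ _ _

lemma diagSum_sub {G : Type*} [AddCommGroup G] (f g : ℕ → ℕ → G) (m : ℕ) :
    diagSum (fun n k => f n k - g n k) m = diagSum f m - diagSum g m :=
  sum_sub_distrib _ _

end DiagSum

section Recurrences

variable {R : Type*} [CommRing R]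

def WRecurrence (b c : R) (w : ℕ → R) : Prop :=
  ∀ n : ℕ, 1 ≤ n →
    (n : R) * w n =
      -((n : R) * ((n : R) - 1) - b) * w (n - 1) + c * (if 3 ≤ n then w (n - 3) else 0)

def URecurrence (b c : R) (u : ℕ → R) : Prop :=
  ∀ n : ℕ, 1 ≤ n →
    (n : R) * u n =
      2 * (2 * (n : R) - 1) * ((n : R) * ((n : R) - 1) - b) * u (n - 1)
        - 4 * c * ((n : R) - 1) * (if 2 ≤ n then u (n - 2) else 0)

theorem URecurrence.unique [IsAddTorsionFree R] {b c : R} {u v : ℕ → R} (hu : URecurrence b c u)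
    (hv : URecurrence b c v) (h0 : u 0 = v 0) : u = v := by
  funext n
  induction n using Nat.strong_induction_on with
  | _ n ih =>
    rcases n with _ | n
    · exact h0
    · apply nsmul_right_injective n.succ_ne_zero
      simp only [nsmul_eq_mul]
      rw [hu _ le_add_self, hv _ le_add_self, ih (n + 1 - 1) (by omega), ih (n + 1 - 2) (by omega)]

def summand (c : R) (w : ℕ → R) (n k : ℕ) : R := (-1) ^ (n + k) * c ^ k * weight n k * w n

def shiftedSummand (c : R) (w : ℕ → R) (n k : ℕ) : R :=
  (-1) ^ (n + k) * c ^ k * (n * weight (n - 1) k) * w n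

theorem mul_diagSum_summand {b c : R} {w : ℕ → R} (hw : WRecurrence b c w) (m : ℕ) :
    (((m : R) + 1) * m - b) * diagSum (summand c w) m = diagSum (shiftedSummand c w) (m + 1) := by
  calc (((m : R) + 1) * m - b) * diagSum (summand c w) m
      = diagSum (fun n k => shiftedSummand c w (n + 1) k +
          ((-1) ^ (n + k) * c ^ (k + 1) * weight n k * (if 3 ≤ n + 1 then w (n + 1 - 3) else 0) +
            (-1) ^ (n + k) * c ^ k * (2 * k * (2 * n + 2 * k + 1)) * weight n k * w n)) m := by
        rw [mul_diagSum]
        refine diagSum_congr fun n k hnk => ?_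
        subst hnk
        have hwn := hw (n + 1) le_add_self
        simp only [summand, shiftedSummand, Nat.add_sub_cancel] at hwn ⊢
        push_cast at hwn ⊢
        linear_combination (-1) ^ (n + k) * c ^ k * (weight n k : R) * hwn
    _ = diagSum (shiftedSummand c w) (m + 1) := by
        rw [diagSum_add, diagSum_add, diagSum_add_eq_zero, add_zero,
          diagSum_succ_of_zero fun k => by simp [shiftedSummand]]
        · simp
        · simp
        · simp
        · intro n k
          rw [if_pos (by omega), show n + 2 + 1 - 3 = n by omega, weight_add_two]
          push_cast
          ring

theorem diagSum_summand_add_two (c : R) (w : ℕ → R) (N : ℕ) :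
    ((N : R) + 2) * diagSum (summand c w) (N + 2) =
      2 * (2 * N + 3) * diagSum (shiftedSummand c w) (N + 2) -
        4 * c * (N + 1) * diagSum (summand c w) N := by
  have h₀ : ((N : R) + 2) * summand c w (N + 2) 0 =
      2 * (2 * N + 3) * shiftedSummand c w (N + 2) 0 := by
    simp only [summand, shiftedSummand, weight_succ_zero (N + 1)]
    push_cast
    ring
  have h₁ : ((N : R) + 2) * diagSum (fun n k => summand c w n (k + 1)) N =
      2 * (2 * N + 3) * diagSum (fun n k => shiftedSummand c w n (k + 1)) N -
        4 * c * (N + 1) * diagSum (summand c w) N := by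
    rw [mul_diagSum, mul_diagSum, mul_diagSum, ← diagSum_sub]
    refine diagSum_congr fun n k hnk => ?_
    subst hnk
    have h := congrArg (Nat.cast : ℕ → R) (weight_succ_right n k)
    simp only [summand, shiftedSummand]
    push_cast at h ⊢
    linear_combination (-1) ^ (n + k + 1) * c ^ (k + 1) * w n * h
  rw [diagSum_add_two, diagSum_add_two]
  linear_combination h₀ + h₁

theorem uRecurrence_diagSum_summand {b c : R} {w : ℕ → R} (hw : WRecurrence b c w) :
    URecurrence b c (diagSum (summand c w)) := by
  intro n hn
  match n, hn with
  | 1, _ =>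
    have hw₁ := hw 1 le_rfl
    have hv₀ : diagSum (summand c w) 0 = w 0 := by simp [diagSum, summand, weight]
    have hv₁ : diagSum (summand c w) 1 = -2 * w 1 := by simp [diagSum, summand, weight]
    rw [Nat.sub_self, if_neg (by norm_num)] at hw₁ ⊢
    rw [hv₀, hv₁]
    push_cast at hw₁ ⊢
    linear_combination -2 * hw₁
  | N + 2, _ =>
    have h := mul_diagSum_summand hw (N + 1)
    have h₂ := diagSum_summand_add_two c w N
    rw [if_pos le_add_self, Nat.add_sub_cancel, show N + 2 - 1 = N + 1 from rfl]
    push_cast at h ⊢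
    linear_combination h₂ - 2 * (2 * (N : R) + 3) * h

end Recurrences

theorem statement4_general
    (b c : Rbc)
    (u w : ℕ → Rbc)
    (hu0 : u 0 = 1)
    (hurec : ∀ n : ℕ, 1 ≤ n →
      (n : Rbc) * u n =
        2 * (2 * (n : Rbc) - 1) * ((n : Rbc) * ((n : Rbc) - 1) - b) * u (n - 1)
          - 4 * c * ((n : Rbc) - 1) * (if 2 ≤ n then u (n - 2) else 0))
    (hw0 : w 0 = 1)
    (hwrec : ∀ n : ℕ, 1 ≤ n →
      (n : Rbc) * w n =
        -((n : Rbc) * ((n : Rbc) - 1) - b) * w (n - 1)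
          + c * (if 3 ≤ n then w (n - 3) else 0)) :
    PowerSeries.mk (fun m : ℕ => if Even m then u (m / 2) else 0) =
      PowerSeries.mk (fun m : ℕ =>
        ∑ k ∈ Finset.range (m + 1), ∑ n ∈ Finset.range (m + 1),
          if 4 * k + 2 * n = m then
            (-1 : Rbc) ^ k * c ^ k *
              ((-1 : Rbc) ^ n * (n.factorial : Rbc) * w n *
                (Nat.choose (n + k) k : Rbc) * (Nat.choose (2 * n + 2 * k) (n + k) : Rbc))
          else 0) := by
  have huv : u = diagSum (summand c w) :=
    URecurrence.unique hurec (uRecurrence_diagSum_summand hwrec)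
      (by simp [diagSum, summand, weight, hu0, hw0])
  refine PowerSeries.ext fun m => ?_
  rw [PowerSeries.coeff_mk, PowerSeries.coeff_mk, sum_sum_ite_eq_diagSum, huv]
  split_ifs
  · refine diagSum_congr fun n k _ => ?_
    simp only [summand, weight]
    push_cast
    ring
  · rfl

/-- Identity (8) of the paper:
`∑ₙ uₙ t^{2n} = ∑ₖ (-1)^k c^k t^{4k} ∑ₙ (-1)^n n! wₙ C(n+k,k) C(2n+2k,n+k) t^{2n}`
in `ℚ[b,c][[t]]`. -/
theorem statement4
    (b c : Rbc) (hb : b = MvPolynomial.X 0) (hc : c = MvPolynomial.X 1)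
    (u w : ℕ → Rbc)
    (hu0 : u 0 = 1)
    (hurec : ∀ n : ℕ, 1 ≤ n →
      (n : Rbc) * u n =
        2 * (2 * (n : Rbc) - 1) * ((n : Rbc) * ((n : Rbc) - 1) - b) * u (n - 1)
          - 4 * c * ((n : Rbc) - 1) * (if 2 ≤ n then u (n - 2) else 0))
    (hw0 : w 0 = 1)
    (hwrec : ∀ n : ℕ, 1 ≤ n →
      (n : Rbc) * w n =
        -((n : Rbc) * ((n : Rbc) - 1) - b) * w (n - 1)
          + c * (if 3 ≤ n then w (n - 3) else 0)) :
    PowerSeries.mk (fun m : ℕ => if Even m then u (m / 2) else 0) =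
      PowerSeries.mk (fun m : ℕ =>
        ∑ k ∈ Finset.range (m + 1), ∑ n ∈ Finset.range (m + 1),
          if 4 * k + 2 * n = m then
            (-1 : Rbc) ^ k * c ^ k *
              ((-1 : Rbc) ^ n * (n.factorial : Rbc) * w n *
                (Nat.choose (n + k) k : Rbc) * (Nat.choose (2 * n + 2 * k) (n + k) : Rbc))
          else 0) :=
  statement4_general b c u w hu0 hurec hw0 hwrec
end

section
/- For every n ≥ 0 the identity u_n = (-1)^n · Σ_{k=0}^{⌊n/2⌋} (-1)^k · c^k · (n-2k)! · w_{n-2k} · C(n-k,k) · C(2n-2k,n-k) holds in ℚ[b,c]. -/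
open Nat Finset

def wCoeff (n k : ℕ) : ℕ := (n - 2 * k)! * (n - k).choose k * (2 * n - 2 * k).choose (n - k)

lemma wCoeff_eq_zero {n k : ℕ} (h : n < 2 * k) : wCoeff n k = 0 := by
  rcases le_or_gt k n with hkn | hnk
  · simp [wCoeff, Nat.choose_eq_zero_of_lt (show n - k < k by omega)]
  · simp [wCoeff, Nat.sub_eq_zero_of_le hnk.le, Nat.choose_eq_zero_of_lt (show 0 < k by omega)]

lemma wCoeff_mul_factorial_mul_factorial (k j : ℕ) :
    wCoeff (2 * k + j) k * (k ! * (k + j)!) = (2 * (k + j))! := by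
  have h1 : (k + j).choose k * j ! * k ! = (k + j)! := by
    rw [add_comm k j]; exact add_choose_mul_factorial_mul_factorial j k
  have h2 := add_choose_mul_factorial_mul_factorial (k + j) (k + j)
  rw [wCoeff, show 2 * k + j - 2 * k = j by omega, show 2 * k + j - k = k + j by omega,
    show 2 * (2 * k + j) - 2 * k = k + j + (k + j) by omega, two_mul, ← h2, ← h1]
  ring

lemma cast_wCoeff (k j : ℕ) :
    (wCoeff (2 * k + j) k : ℚ) = (2 * (k + j))! / (k ! * (k + j)! : ℚ) := by
  rw [eq_div_iff (by positivity)]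
  exact_mod_cast wCoeff_mul_factorial_mul_factorial k j

lemma wCoeff_succ_zero (n : ℕ) : wCoeff (n + 1) 0 = 2 * (2 * n + 1) * wCoeff n 0 := by
  have h1 := cast_wCoeff 0 (n + 1)
  have h2 := cast_wCoeff 0 n
  simp only [mul_zero, zero_add] at h1 h2
  rw [← Nat.cast_inj (R := ℚ)]
  push_cast [h1, h2, show 2 * (n + 1) = 2 * n + 1 + 1 by ring, factorial_succ]
  field_simp
  ring

lemma wCoeff_eq_mul_wCoeff_succ (k j : ℕ) :
    wCoeff (2 * k + j + 2) k =
      2 * (k + 1) * (2 * k + 2 * j + 3) * wCoeff (2 * k + j + 2) (k + 1) := by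
  have h1 := cast_wCoeff k (j + 2)
  have h2 := cast_wCoeff (k + 1) j
  rw [← add_assoc, show 2 * (k + (j + 2)) = 2 * (k + 1 + j) + 1 + 1 by ring,
    show k + (j + 2) = k + 1 + j + 1 by ring, factorial_succ (2 * (k + 1 + j) + 1),
    factorial_succ (2 * (k + 1 + j)), factorial_succ (k + 1 + j)] at h1
  rw [show 2 * (k + 1) + j = 2 * k + j + 2 by ring, factorial_succ k] at h2
  rw [← Nat.cast_inj (R := ℚ)]
  push_cast [h1, h2]
  field_simp
  ring

lemma succ_succ_mul_wCoeff (m k : ℕ) :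
    (m + 2) * wCoeff (m + 2) (k + 1) =
      2 * (2 * m + 3) * (m - 2 * k) * wCoeff (m + 1) (k + 1) + 4 * (m + 1) * wCoeff m k := by
  obtain hlt | rfl | ⟨j, rfl⟩ : m < 2 * k ∨ m = 2 * k ∨ ∃ j, m = 2 * k + j + 1 := by
    rcases lt_trichotomy m (2 * k) with h | h | h
    exacts [.inl h, .inr (.inl h), .inr (.inr ⟨m - 2 * k - 1, by omega⟩)]
  · simp [wCoeff_eq_zero (show m + 2 < 2 * (k + 1) by omega), wCoeff_eq_zero hlt,
      Nat.sub_eq_zero_of_le hlt.le]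
  · have h1 := cast_wCoeff (k + 1) 0
    have h2 := cast_wCoeff k 0
    rw [show 2 * (k + 1) = 2 * k + 1 + 1 by ring, factorial_succ (2 * k + 1),
      factorial_succ (2 * k), factorial_succ k] at h1
    simp only [add_zero] at h1 h2
    rw [wCoeff_eq_zero (show 2 * k + 1 < 2 * (k + 1) by omega), ← Nat.cast_inj (R := ℚ)]
    push_cast [h1, h2]
    field_simp
    ring
  · have h1 := cast_wCoeff (k + 1) (j + 1)
    have h2 := cast_wCoeff (k + 1) j
    have h3 := cast_wCoeff k (j + 1)
    rw [show 2 * (k + 1) + (j + 1) = 2 * k + j + 1 + 2 by ring,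
      show 2 * (k + 1 + (j + 1)) = 2 * (k + 1 + j) + 1 + 1 by ring,
      show k + 1 + (j + 1) = k + 1 + j + 1 by ring, factorial_succ (2 * (k + 1 + j) + 1),
      factorial_succ (2 * (k + 1 + j)), factorial_succ (k + 1 + j), factorial_succ k] at h1
    rw [show 2 * (k + 1) + j = 2 * k + j + 1 + 1 by ring, factorial_succ k] at h2
    rw [← add_assoc, show k + (j + 1) = k + 1 + j by ring] at h3
    rw [← Nat.cast_inj (R := ℚ)]
    push_cast [h1, h2, h3, show 2 * k + j + 1 - 2 * k = j + 1 by omega]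
    field_simp
    ring

section
variable {R : Type*} [CommRing R]

def wSum (c : R) (w : ℕ → R) (n : ℕ) : R :=
  ∑ k ∈ range (n / 2 + 1), (-1) ^ k * c ^ k * (wCoeff n k : R) * w (n - 2 * k)

lemma wSum_eq_sum_range (c : R) (w : ℕ → R) {n N : ℕ} (h : n / 2 < N) :
    wSum c w n = ∑ k ∈ range N, (-1) ^ k * c ^ k * (wCoeff n k : R) * w (n - 2 * k) := by
  refine sum_subset (range_subset_range.2 h) fun k _ hk => ?_
  rw [wCoeff_eq_zero (by simp only [mem_range] at hk; omega)]
  simp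

theorem wSum_recurrence (b c : R) (w : ℕ → R)
    (hw : ∀ n : ℕ, 1 ≤ n → (n : R) * w n =
      -((n : R) * ((n : R) - 1) - b) * w (n - 1) + c * (if 3 ≤ n then w (n - 3) else 0))
    (m : ℕ) :
    (m + 2 : R) * wSum c w (m + 2) + 2 * (2 * m + 3) * ((m + 2) * (m + 1) - b) * wSum c w (m + 1)
      + 4 * c * (m + 1) * wSum c w m = 0 := by
  -- `P` collects the terms with `w` at indices of the parity of `m`, `Q` those of the other parity.
  set P : ℕ → R := fun k => (-1) ^ k * c ^ k * w (m + 2 - 2 * k) *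
      ((m + 2) * wCoeff (m + 2) k - 2 * (2 * m + 3) * (m + 2 - 2 * k : ℕ) * wCoeff (m + 1) k)
    with hP
  set Q : ℕ → R := fun k => (-1) ^ k * c ^ k * w (m + 1 - 2 * k) * wCoeff (m + 1) k *
    ((m + 2) * (m + 1) - (m + 2 - 2 * k : ℕ) * ((m + 2 - 2 * k : ℕ) - 1)) with hQ
  have hPk : ∀ k, (-1) ^ k * c ^ k * ((m + 2) * wCoeff (m + 2) k * w (m + 2 - 2 * k)
      + 4 * c * (m + 1) * wCoeff m k * w (m - 2 * k)) =
      P k - P (k + 1) + 2 * (2 * m + 3) *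
        ((-1) ^ k * c ^ k * wCoeff (m + 1) k * (m + 2 - 2 * k : ℕ) * w (m + 2 - 2 * k)) := by
    intro k
    have hrec := congrArg (Nat.cast : ℕ → R) (succ_succ_mul_wCoeff m k)
    push_cast at hrec
    simp only [hP, show m + 2 - 2 * (k + 1) = m - 2 * k by omega]
    linear_combination -((-1) ^ k * c ^ (k + 1) * w (m - 2 * k)) * hrec
  have hQk : ∀ k, (-1) ^ k * c ^ k * wCoeff (m + 1) k *
      (((m + 2) * (m + 1) - b) * w (m + 1 - 2 * k) + (m + 2 - 2 * k : ℕ) * w (m + 2 - 2 * k)) =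
      Q k - Q (k + 1) := by
    intro k
    rcases lt_or_ge (m + 1) (2 * k) with hlt | hle
    · simp [hQ, wCoeff_eq_zero hlt, wCoeff_eq_zero (show m + 1 < 2 * (k + 1) by omega)]
    have hwk := hw (m + 2 - 2 * k) (by omega)
    rw [show m + 2 - 2 * k - 1 = m + 1 - 2 * k by omega] at hwk
    split_ifs at hwk with h3
    · obtain ⟨j, rfl⟩ : ∃ j, m = 2 * k + j + 1 := ⟨m - 2 * k - 1, by omega⟩
      have hcoeff := congrArg (Nat.cast : ℕ → R) (wCoeff_eq_mul_wCoeff_succ k j)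
      simp only [hQ, show 2 * k + j + 1 + 2 - 2 * k = j + 3 by omega,
        show 2 * k + j + 1 + 1 - 2 * k = j + 2 by omega, show j + 3 - 3 = j by omega,
        show 2 * k + j + 1 + 2 - 2 * (k + 1) = j + 1 by omega,
        show 2 * k + j + 1 + 1 - 2 * (k + 1) = j by omega,
        show 2 * k + j + 1 + 1 = 2 * k + j + 2 by omega] at hwk ⊢
      push_cast at hwk hcoeff ⊢
      linear_combination (-1) ^ k * c ^ k * ↑(wCoeff (2 * k + j + 2) k) * hwk
        + (-1) ^ k * c ^ (k + 1) * w j * hcoeff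
    · simp only [hQ, wCoeff_eq_zero (show m + 1 < 2 * (k + 1) by omega)]
      push_cast
      linear_combination (-1) ^ k * c ^ k * ↑(wCoeff (m + 1) k) * hwk
  calc _ = ∑ k ∈ range (m + 2), (P k - P (k + 1) + 2 * (2 * m + 3) * (Q k - Q (k + 1))) := by
        rw [wSum_eq_sum_range c w (N := m + 2) (by omega),
          wSum_eq_sum_range c w (N := m + 2) (by omega),
          wSum_eq_sum_range c w (N := m + 2) (by omega), mul_sum, mul_sum, mul_sum,
          ← sum_add_distrib, ← sum_add_distrib]
        refine sum_congr rfl fun k _ => ?_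
        linear_combination hPk k + 2 * (2 * (m : R) + 3) * hQk k
    _ = P 0 - P (m + 2) + 2 * (2 * m + 3) * (Q 0 - Q (m + 2)) := by
        rw [sum_add_distrib, ← mul_sum, sum_range_sub', sum_range_sub']
    _ = 0 := by
        have h0 : ((m + 2) * wCoeff (m + 2) 0 : R) =
            2 * (2 * m + 3) * (m + 2) * wCoeff (m + 1) 0 := by
          rw [wCoeff_succ_zero (m + 1)]; push_cast; ring
        simp [hP, hQ, wCoeff_eq_zero (show m + 2 < 2 * (m + 2) by omega),
          wCoeff_eq_zero (show m + 1 < 2 * (m + 2) by omega), h0]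
        ring

theorem eq_of_two_step_recurrence [IsDomain R] [CharZero R]
    (F : ℕ → R → R → R) {u v : ℕ → R} (h0 : u 0 = v 0) (h1 : u 1 = v 1)
    (hu : ∀ n : ℕ, (n + 2 : R) * u (n + 2) = F n (u (n + 1)) (u n))
    (hv : ∀ n : ℕ, (n + 2 : R) * v (n + 2) = F n (v (n + 1)) (v n)) : u = v := by
  have h : ∀ n, u n = v n ∧ u (n + 1) = v (n + 1) := by
    intro n
    induction n with
    | zero => exact ⟨h0, h1⟩
    | succ n ih =>
      refine ⟨ih.2, mul_left_cancel₀ (?_ : (n + 2 : R) ≠ 0) ?_⟩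
      · exact_mod_cast (show n + 2 ≠ 0 by omega)
      · rw [hu, hv, ih.1, ih.2]
  exact funext fun n => (h n).1

end

theorem statement5_general
    (b c : Rbc)
    (u w : ℕ → Rbc)
    (hu0 : u 0 = 1)
    (hurec : ∀ n : ℕ, 1 ≤ n →
      (n : Rbc) * u n =
        2 * (2 * (n : Rbc) - 1) * ((n : Rbc) * ((n : Rbc) - 1) - b) * u (n - 1)
          - 4 * c * ((n : Rbc) - 1) * (if 2 ≤ n then u (n - 2) else 0))
    (hw0 : w 0 = 1)
    (hwrec : ∀ n : ℕ, 1 ≤ n →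
      (n : Rbc) * w n =
        -((n : Rbc) * ((n : Rbc) - 1) - b) * w (n - 1)
          + c * (if 3 ≤ n then w (n - 3) else 0)) :
    ∀ n : ℕ,
      u n = (-1 : Rbc) ^ n *
        ∑ k ∈ Finset.range (n / 2 + 1),
          (-1 : Rbc) ^ k * c ^ k * ((n - 2 * k).factorial : Rbc) * w (n - 2 * k) *
            (Nat.choose (n - k) k : Rbc) * (Nat.choose (2 * n - 2 * k) (n - k) : Rbc) := by
  have hu1 : u 1 = -2 * b := by
    have h := hurec 1 le_rfl
    norm_num [hu0] at h
    linear_combination h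
  have hw1 : w 1 = b := by simpa [hw0] using hwrec 1 le_rfl
  have hu_eq : u = fun n => (-1) ^ n * wSum c w n := by
    refine eq_of_two_step_recurrence
      (fun n x y => 2 * (2 * n + 3) * ((n + 2) * (n + 1) - b) * x - 4 * c * (n + 1) * y)
      ?_ ?_ (fun n => ?_) (fun n => ?_)
    · simp [hu0, wSum, wCoeff, hw0]
    · simp [hu1, wSum, wCoeff, hw1]
    · have hn := hurec (n + 2) (by omega)
      simp only [if_pos (show 2 ≤ n + 2 by omega), Nat.add_sub_cancel,
        show n + 2 - 1 = n + 1 by omega] at hn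
      push_cast at hn
      linear_combination hn
    · linear_combination (-1) ^ n * wSum_recurrence b c w hwrec n
  intro n
  rw [hu_eq]
  refine congrArg _ (Finset.sum_congr rfl fun k _ => ?_)
  push_cast [wCoeff]
  ring

/-- Identity (9) of the paper:
`uₙ = (-1)ⁿ ∑_{k=0}^{⌊n/2⌋} (-1)^k c^k (n-2k)! w_{n-2k} C(n-k,k) C(2n-2k,n-k)`
in `ℚ[b,c]`. -/
theorem statement5
    (b c : Rbc) (hb : b = MvPolynomial.X 0) (hc : c = MvPolynomial.X 1)
    (u w : ℕ → Rbc)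
    (hu0 : u 0 = 1)
    (hurec : ∀ n : ℕ, 1 ≤ n →
      (n : Rbc) * u n =
        2 * (2 * (n : Rbc) - 1) * ((n : Rbc) * ((n : Rbc) - 1) - b) * u (n - 1)
          - 4 * c * ((n : Rbc) - 1) * (if 2 ≤ n then u (n - 2) else 0))
    (hw0 : w 0 = 1)
    (hwrec : ∀ n : ℕ, 1 ≤ n →
      (n : Rbc) * w n =
        -((n : Rbc) * ((n : Rbc) - 1) - b) * w (n - 1)
          + c * (if 3 ≤ n then w (n - 3) else 0)) :
    ∀ n : ℕ,
      u n = (-1 : Rbc) ^ n *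
        ∑ k ∈ Finset.range (n / 2 + 1),
          (-1 : Rbc) ^ k * c ^ k * ((n - 2 * k).factorial : Rbc) * w (n - 2 * k) *
            (Nat.choose (n - k) k : Rbc) * (Nat.choose (2 * n - 2 * k) (n - k) : Rbc) :=
  statement5_general b c u w hu0 hurec hw0 hwrec
end

section
/- In the formal power series ring ℚ[b,c][[t]] the identity Σ_{n≥0} u_n t^{2n} = (1 + 4c·t^4)^{-1/2} · Σ_{n≥0} C(2n,n) · n! · w_n · (-t²)^n · (1 + 4c·t^4)^{-n} holds, where (1 + 4c·t^4)^{-1/2} denotes the formal binomial series Σ_{k≥0} binom(-1/2, k)·(4c·t^4)^k and (1 + 4c·t^4)^{-n} denotes the inverse of the n-th power of the invertible power series 1 + 4c·t^4. -/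
/-!
Write `θ = t d/dt`. Read coefficientwise, the recursion of `u` says that `U = ∑ uₙ t^{2n}` is
the solution with constant term `1` of
`θU = t² (θ(θ+1)(θ+2) - 4b(θ+1)) U - 4c t⁴ (θ+2) U`
(the odd coefficients of a solution are forced to vanish), and the recursion of `w` says that
`G(s) = ∑ C(2n,n) n! wₙ sⁿ` satisfies
`θG = -2s (2θ+1)(θ²+θ-b) G + 8c s³ (2θ+1)(2θ+3)(2θ+5) G`.
Put `σ = 1/(1+4ct⁴)`, `s = -t²σ` and `A = σ^{1/2}`. Since `4ct⁴σ = 1 - σ`, all derivatives are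
polynomials in `σ`: `θσ = 4σ(σ-1)`, `θA = 2(σ-1)A` and `θ(f∘s) = (4σ-2) (θf)∘s`. Substituting
the equation of `G` into the `θ`-derivatives of `A · G∘s` shows that `A · G∘s` solves the
equation of `U`.
-/
open PowerSeries Finset

def binomNegHalf (k : ℕ) : ℚ := (∏ i ∈ range k, (-1 / 2 - (i : ℚ))) / k.factorial

lemma two_mul_succ_mul_binomNegHalf_succ (k : ℕ) :
    2 * (k + 1) * binomNegHalf (k + 1) = -(2 * k + 1) * binomNegHalf k := by
  rw [binomNegHalf, binomNegHalf, prod_range_succ, Nat.factorial_succ]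
  push_cast
  field_simp
  ring

def centralBinomMulFactorial (n : ℕ) : ℕ := n.centralBinom * n.factorial

lemma centralBinomMulFactorial_succ (n : ℕ) :
    centralBinomMulFactorial (n + 1) = 2 * (2 * n + 1) * centralBinomMulFactorial n := by
  rw [centralBinomMulFactorial, centralBinomMulFactorial, Nat.factorial_succ, ← mul_assoc,
    mul_comm _ (n + 1), Nat.succ_mul_centralBinom_succ]
  ring

lemma isUnit_natCast_of_ne_zero {R : Type*} [Ring R] [Algebra ℚ R] {n : ℕ} (hn : n ≠ 0) :
    IsUnit (n : R) := by
  simpa using (IsUnit.mk0 (n : ℚ) (Nat.cast_ne_zero.mpr hn)).map (algebraMap ℚ R)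

namespace PowerSeries

variable {R : Type*} [CommRing R]

noncomputable def eulerOp : Derivation R R⟦X⟧ R⟦X⟧ := (X : R⟦X⟧) • derivative R

local notation "θ" => eulerOp

lemma eulerOp_apply (f : R⟦X⟧) : θ f = X * d⁄dX R f := rfl

@[simp] lemma coeff_eulerOp (f : R⟦X⟧) (n : ℕ) : coeff n (θ f) = n * coeff n f := by
  cases n with
  | zero => simp [eulerOp_apply]
  | succ n => rw [eulerOp_apply, coeff_succ_X_mul, coeff_derivative]; push_cast; ring

lemma eulerOp_X_pow (k : ℕ) : θ (X ^ k : R⟦X⟧) = (k : R⟦X⟧) * X ^ k := by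
  rw [Derivation.leibniz_pow, eulerOp_apply, derivative_X]
  cases k <;> simp [pow_succ]

lemma eulerOp_C (r : R) : θ (C r) = 0 := Derivation.map_algebraMap _ r

lemma eulerOp_ofNat (n : ℕ) [n.AtLeastTwo] : θ (no_index (OfNat.ofNat n : R⟦X⟧)) = 0 := by
  rw [← Nat.cast_ofNat, Derivation.map_natCast]

@[simp] lemma coeff_ofNat_mul (k : ℕ) [k.AtLeastTwo] (f : R⟦X⟧) (n : ℕ) :
    coeff n ((no_index (OfNat.ofNat k : R⟦X⟧)) * f) = OfNat.ofNat k * coeff n f := by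
  rw [← map_ofNat C k, coeff_C_mul]

lemma eulerOp_subst {s φ : R⟦X⟧} (hs : HasSubst s) (hθs : θ s = φ * s) (f : R⟦X⟧) :
    θ (f.subst s) = φ * (θ f).subst s := by
  rw [eulerOp_apply, eulerOp_apply, derivative_subst hs, subst_mul hs, subst_X hs]
  rw [eulerOp_apply] at hθs
  linear_combination (d⁄dX R f).subst s * hθs

lemma eulerOp_subst_X_pow {d : ℕ} (hd : d ≠ 0) (f : R⟦X⟧) :
    θ (f.subst (X ^ d : R⟦X⟧)) = d * (θ f).subst (X ^ d : R⟦X⟧) :=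
  eulerOp_subst (HasSubst.X_pow hd) (eulerOp_X_pow d) f

/-- Only the first `m + 1` terms of `f` matter, because `X ^ (m + 1)` divides `s ^ (m + 1)`. -/
lemma coeff_mul_subst_eq_sum {s : R⟦X⟧} (hs : X ∣ s) (P f : R⟦X⟧) (m : ℕ) :
    coeff m (P * f.subst s) = ∑ n ∈ range (m + 1), coeff m (P * (C (coeff n f) * s ^ n)) := by
  have hsubst : HasSubst s := HasSubst.of_constantCoeff_zero' (X_dvd_iff.mp hs)
  obtain ⟨t, rfl⟩ := hs
  set g := mk fun i ↦ coeff (i + (m + 1)) f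
  conv_lhs => rw [eq_X_pow_mul_shift_add_trunc (m + 1) f]
  rw [subst_add hsubst, subst_mul hsubst, subst_pow hsubst, subst_X hsubst, subst_coe hsubst,
    Polynomial.aeval_def, eval₂_trunc_eq_sum_range, mul_add, mul_sum, map_add, map_sum]
  have hhigh : coeff m (P * ((X * t) ^ (m + 1) * g.subst (X * t))) = 0 := by
    rw [mul_pow, show P * (X ^ (m + 1) * t ^ (m + 1) * g.subst (X * t)) =
      X ^ (m + 1) * (P * t ^ (m + 1) * g.subst (X * t)) by ring, coeff_X_pow_mul',
      if_neg (by omega)]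
  rw [hhigh, zero_add, algebraMap_eq]

def SatisfiesUODE (b c : R) (F : R⟦X⟧) : Prop :=
  θ F = X ^ 2 * (θ (θ (θ F)) + 3 * θ (θ F) + 2 * θ F - 4 * C b * θ F - 4 * C b * F)
    - 4 * C c * X ^ 4 * (θ F + 2 * F)

def SatisfiesWODE (b c : R) (G : R⟦X⟧) : Prop :=
  θ G = -2 * X * (2 * θ (θ (θ G)) + 3 * θ (θ G) + (1 - 2 * C b) * θ G - C b * G)
    + 8 * C c * X ^ 3 * (8 * θ (θ (θ G)) + 36 * θ (θ G) + 46 * θ G + 15 * G)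

noncomputable def centralBinomMulFactorialSeries (w : ℕ → R) : R⟦X⟧ :=
  mk fun n ↦ (centralBinomMulFactorial n : R) * w n

lemma satisfiesWODE_centralBinomMulFactorialSeries (b c : R) (w : ℕ → R)
    (hw : ∀ n : ℕ, 1 ≤ n →
      (n : R) * w n = -((n : R) * ((n : R) - 1) - b) * w (n - 1)
        + c * (if 3 ≤ n then w (n - 3) else 0)) :
    SatisfiesWODE b c (centralBinomMulFactorialSeries w) := by
  have hidx (n : ℕ) : n + 1 + 1 + 1 - 3 = n := by omega
  unfold SatisfiesWODE
  ext (_ | _ | _ | n)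
  all_goals simp only [map_add, map_sub, map_neg, neg_mul, mul_assoc, sub_mul, one_mul,
    coeff_succ_X_mul, coeff_zero_X_mul, coeff_X_pow_mul', coeff_C_mul, coeff_ofNat_mul,
    coeff_eulerOp, centralBinomMulFactorialSeries, coeff_mk, hidx]
  all_goals norm_num [centralBinomMulFactorial_succ]
  · have h := hw 1 le_rfl
    norm_num at h
    linear_combination 2 * (centralBinomMulFactorial 0 : R) * h
  · have h := hw 2 (by norm_num)
    norm_num at h
    linear_combination 12 * (centralBinomMulFactorial 0 : R) * h
  · have h := hw (n + 3) (by omega)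
    norm_num [hidx] at h
    linear_combination
      8 * (2 * n + 5) * (2 * n + 3) * (2 * n + 1) * (centralBinomMulFactorial n : R) * h

lemma satisfiesUODE_mul_subst (b c : R) {σ A G : R⟦X⟧}
    (hσ : (1 + 4 * C c * X ^ 4) * σ = 1)
    (hA : (1 + 4 * C c * X ^ 4) * θ A = -(8 * C c * X ^ 4 * A))
    (hG : SatisfiesWODE b c G) :
    SatisfiesUODE b c (A * G.subst (-X ^ 2 * σ)) := by
  set F := A * G.subst (-X ^ 2 * σ)
  have hκ : 4 * C c * X ^ 4 * σ = 1 - σ := by linear_combination hσ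
  have hθσ : θ σ = 4 * σ * (σ - 1) := by
    have h := Derivation.leibniz_of_mul_eq_one (D := θ)
      (show σ * (1 + 4 * C c * X ^ 4) = 1 by linear_combination hσ)
    simp only [Derivation.leibniz, Derivation.map_add, smul_eq_mul, eulerOp_C, eulerOp_ofNat,
      eulerOp_X_pow, Derivation.map_one_eq_zero] at h
    linear_combination h - 4 * σ * hκ
  have hθA : θ A = 2 * (σ - 1) * A := by
    linear_combination σ * hA - θ A * hσ - 2 * A * hκ
  have hs : HasSubst (-X ^ 2 * σ : R⟦X⟧) := HasSubst.of_constantCoeff_zero' (by simp)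
  have hθs : θ (-X ^ 2 * σ) = (4 * σ - 2) * (-X ^ 2 * σ) := by
    simp only [Derivation.leibniz, Derivation.map_neg, smul_eq_mul, eulerOp_X_pow, hθσ]
    push_cast
    ring
  have hθsubst (f : R⟦X⟧) := eulerOp_subst hs hθs f
  have hGs := congrArg (substAlgHom hs) hG
  simp only [map_add, map_sub, map_mul, map_neg, map_one, map_ofNat, map_pow, substAlgHom_X,
    coe_substAlgHom, ← algebraMap_eq, AlgHom.commutes] at hGs
  simp only [algebraMap_eq] at hGs
  set H₀ := G.subst (-X ^ 2 * σ)
  set H₁ := (θ G).subst (-X ^ 2 * σ)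
  set H₂ := (θ (θ G)).subst (-X ^ 2 * σ)
  set H₃ := (θ (θ (θ G))).subst (-X ^ 2 * σ)
  have hH : H₁ = 2 * X ^ 2 * σ * (2 * H₃ + 3 * H₂ + (1 - 2 * C b) * H₁ - C b * H₀)
      - 2 * X ^ 2 * σ ^ 2 * (1 - σ) * (8 * H₃ + 36 * H₂ + 46 * H₁ + 15 * H₀) := by
    linear_combination
      hGs - 2 * X ^ 2 * σ ^ 2 * (8 * H₃ + 36 * H₂ + 46 * H₁ + 15 * H₀) * hκ
  have hσF : σ * (θ F - X ^ 2 * (θ (θ (θ F)) + 3 * θ (θ F) + 2 * θ F - 4 * C b * θ F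
      - 4 * C b * F)) + (1 - σ) * (θ F + 2 * F) = 0 := by
    simp only [F, Derivation.leibniz, Derivation.map_add, Derivation.map_sub, smul_eq_mul, hθσ,
      hθA, hθsubst, eulerOp_ofNat, Derivation.map_one_eq_zero, Derivation.map_zero]
    linear_combination A * (4 * σ - 2) * hH
  refine (IsUnit.of_mul_eq_one _
    (by linear_combination hσ : σ * (1 + 4 * C c * X ^ 4) = 1)).mul_left_cancel ?_
  linear_combination hσF + (θ F + 2 * F) * hκ

lemma SatisfiesUODE.coeff_add_four {b c : R} {F : R⟦X⟧} (hF : SatisfiesUODE b c F) (m : ℕ) :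
    ((m + 4 : ℕ) : R) * coeff (m + 4) F =
      (((m : R) + 2) * ((m : R) + 3) * ((m : R) + 4) - 4 * b * ((m : R) + 3)) * coeff (m + 2) F
        - 4 * c * ((m : R) + 2) * coeff m F := by
  have h := congrArg (coeff (m + 4)) hF
  simp only [coeff_eulerOp, map_sub, coeff_X_pow_mul', map_add, coeff_ofNat_mul, mul_assoc,
    coeff_C_mul, ← mul_comm (X ^ 4 : R⟦X⟧), show m + 4 - 2 = m + 2 by omega,
    show m + 4 - 4 = m by omega, if_pos (show 2 ≤ m + 4 by omega),
    if_pos (show 4 ≤ m + 4 by omega)] at h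
  push_cast at h ⊢
  linear_combination h

section RatAlgebra

variable [Algebra ℚ R]

noncomputable def invSqrtOneAdd (a : R) : R⟦X⟧ :=
  mk fun k ↦ algebraMap ℚ R (binomNegHalf k) * a ^ k

lemma two_mul_one_add_mul_eulerOp_invSqrtOneAdd (a : R) :
    2 * (1 + C a * X) * θ (invSqrtOneAdd a) = -(C a * X * invSqrtOneAdd a) := by
  rw [show (2 : R⟦X⟧) * (1 + C a * X) * θ (invSqrtOneAdd a) =
      C 2 * θ (invSqrtOneAdd a) + C (2 * a) * (X * θ (invSqrtOneAdd a)) by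
        simp only [map_mul, map_ofNat]; ring,
    show -(C a * X * invSqrtOneAdd a) = C (-a) * (X * invSqrtOneAdd a) by
      simp only [map_neg]; ring]
  ext (_ | k)
  · simp only [map_add, coeff_C_mul, coeff_zero_X_mul, coeff_eulerOp]
    simp
  · have h := congrArg (algebraMap ℚ R) (two_mul_succ_mul_binomNegHalf_succ k)
    simp only [map_mul, map_neg, map_add, map_ofNat, map_natCast, map_one] at h
    simp only [map_add, coeff_C_mul, coeff_succ_X_mul, coeff_eulerOp, invSqrtOneAdd, coeff_mk]
    push_cast
    linear_combination a * a ^ k * h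

lemma one_add_mul_eulerOp_invSqrtOneAdd_subst {k : ℕ} (hk : k ≠ 0) (a : R) :
    (1 + C a * X ^ (2 * k)) * θ ((invSqrtOneAdd a).subst (X ^ (2 * k) : R⟦X⟧)) =
      -((k : R⟦X⟧) * C a * X ^ (2 * k) * (invSqrtOneAdd a).subst (X ^ (2 * k) : R⟦X⟧)) := by
  have hs : HasSubst (X ^ (2 * k) : R⟦X⟧) := HasSubst.X_pow (by omega)
  have h := congrArg (substAlgHom hs) (two_mul_one_add_mul_eulerOp_invSqrtOneAdd a)
  simp only [map_mul, map_add, map_neg, map_one, map_ofNat, substAlgHom_X, coe_substAlgHom,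
    ← algebraMap_eq, AlgHom.commutes] at h
  simp only [algebraMap_eq] at h
  rw [eulerOp_subst_X_pow (by omega)]
  push_cast
  linear_combination k * h

lemma coeff_eq_of_satisfiesUODE (b c : R) (u : ℕ → R) (hu0 : u 0 = 1)
    (hu : ∀ n : ℕ, 1 ≤ n →
      (n : R) * u n = 2 * (2 * (n : R) - 1) * ((n : R) * ((n : R) - 1) - b) * u (n - 1)
        - 4 * c * ((n : R) - 1) * (if 2 ≤ n then u (n - 2) else 0))
    {F : R⟦X⟧} (hF0 : coeff 0 F = 1) (hF : SatisfiesUODE b c F) (m : ℕ) :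
    coeff m F = if Even m then u (m / 2) else 0 := by
  have hlow (m : ℕ) := congrArg (coeff m) hF
  simp only [coeff_eulerOp, map_sub, coeff_X_pow_mul', map_add, coeff_ofNat_mul, mul_assoc,
    coeff_C_mul, ← mul_comm (X ^ 4 : R⟦X⟧)] at hlow
  have h1 : coeff 1 F = 0 := by simpa using hlow 1
  have h2 : (2 : R) * coeff 2 F = -4 * b := by simpa [hF0] using hlow 2
  have h3 : (3 : R) * coeff 3 F = 0 := by simpa [h1] using hlow 3
  have cancel {x y : R} (n : ℕ) (hn : n ≠ 0) (h : (n : R) * x = n * y) : x = y :=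
    (isUnit_natCast_of_ne_zero hn).mul_left_cancel h
  have key (N : ℕ) : coeff (2 * N) F = u N ∧ coeff (2 * N + 1) F = 0 := by
    induction N using Nat.strong_induction_on with
    | _ N ih =>
      match N with
      | 0 => exact ⟨by simp [hF0, hu0], h1⟩
      | 1 =>
        have hu1 := hu 1 le_rfl
        norm_num [hu0] at hu1
        exact ⟨cancel 2 two_ne_zero (by push_cast; linear_combination h2 - 2 * hu1),
          cancel 3 three_ne_zero (by push_cast; linear_combination h3)⟩
      | N + 2 =>
        obtain ⟨hN₁, hN₁'⟩ := ih (N + 1) (by omega)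
        obtain ⟨hN, hN'⟩ := ih N (by omega)
        have huN := hu (N + 2) (by omega)
        simp only [show N + 2 - 1 = N + 1 by omega, show N + 2 - 2 = N by omega,
          if_pos (show 2 ≤ N + 2 by omega)] at huN
        have hev := hF.coeff_add_four (2 * N)
        have hodd := hF.coeff_add_four (2 * N + 1)
        rw [show 2 * N + 4 = 2 * (N + 2) by ring, show 2 * N + 2 = 2 * (N + 1) by ring, hN₁, hN]
          at hev
        rw [show 2 * N + 1 + 4 = 2 * (N + 2) + 1 by ring,
          show 2 * N + 1 + 2 = 2 * (N + 1) + 1 by ring, hN₁', hN'] at hodd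
        refine ⟨cancel (2 * (N + 2)) (by omega) ?_, cancel (2 * (N + 2) + 1) (by omega) ?_⟩
        · push_cast at hev huN ⊢
          linear_combination hev - 2 * huN
        · push_cast at hodd ⊢
          linear_combination hodd
  obtain ⟨N, rfl | rfl⟩ := Nat.even_or_odd' m <;> simp [key N]

end RatAlgebra

end PowerSeries

theorem statement7_general
    (b c : Rbc)
    (u w : ℕ → Rbc)
    (hu0 : u 0 = 1)
    (hurec : ∀ n : ℕ, 1 ≤ n →
      (n : Rbc) * u n =
        2 * (2 * (n : Rbc) - 1) * ((n : Rbc) * ((n : Rbc) - 1) - b) * u (n - 1)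
          - 4 * c * ((n : Rbc) - 1) * (if 2 ≤ n then u (n - 2) else 0))
    (hw0 : w 0 = 1)
    (hwrec : ∀ n : ℕ, 1 ≤ n →
      (n : Rbc) * w n =
        -((n : Rbc) * ((n : Rbc) - 1) - b) * w (n - 1)
          + c * (if 3 ≤ n then w (n - 3) else 0))
    (S Sinv : PowerSeries Rbc)
    (hS : S = 1 + 4 * PowerSeries.C c * PowerSeries.X ^ 4)
    (hSinv : S * Sinv = 1)
    (A : PowerSeries Rbc)
    (hA : A = PowerSeries.mk fun j : ℕ =>
      if j % 4 = 0 then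
        MvPolynomial.C
            ((∏ i ∈ Finset.range (j / 4), ((-1 : ℚ) / 2 - (i : ℚ))) / ((j / 4).factorial : ℚ)) *
          (4 * c) ^ (j / 4)
      else 0) :
    ∀ m : ℕ,
      (if Even m then u (m / 2) else 0) =
        ∑ n ∈ Finset.range (m + 1),
          PowerSeries.coeff m
            (A * (PowerSeries.C ((Nat.choose (2 * n) n : Rbc) * (n.factorial : Rbc) * w n) *
              (-(PowerSeries.X : PowerSeries Rbc) ^ 2) ^ n * Sinv ^ n)) := by
  intro m
  have hA_subst : A = (invSqrtOneAdd (4 * c)).subst (X ^ (2 * 2) : Rbc⟦X⟧) := by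
    ext j : 1
    rw [hA, coeff_mk, coeff_subst_X_pow (by norm_num)]
    simp [Nat.dvd_iff_mod_eq_zero, invSqrtOneAdd, binomNegHalf, MvPolynomial.algebraMap_eq]
  have hθA : (1 + 4 * C c * X ^ 4) * eulerOp A = -(8 * C c * X ^ 4 * A) := by
    have h := one_add_mul_eulerOp_invSqrtOneAdd_subst two_ne_zero (4 * c)
    rw [← hA_subst] at h
    simp only [map_mul, map_ofNat] at h
    push_cast at h
    linear_combination h
  have hF := satisfiesUODE_mul_subst b c (hS ▸ hSinv) hθA
    (satisfiesWODE_centralBinomMulFactorialSeries b c w hwrec)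
  have hdvd : X ∣ (-X ^ 2 * Sinv : Rbc⟦X⟧) := ⟨-X * Sinv, by ring⟩
  have hF0 : coeff 0 (A * (centralBinomMulFactorialSeries w).subst (-X ^ 2 * Sinv)) = 1 := by
    rw [coeff_mul_subst_eq_sum hdvd]
    simp [hA, centralBinomMulFactorialSeries, centralBinomMulFactorial, hw0]
  rw [← coeff_eq_of_satisfiesUODE b c u hu0 hurec hF0 hF, coeff_mul_subst_eq_sum hdvd]
  refine sum_congr rfl fun n _ ↦ ?_
  simp only [centralBinomMulFactorialSeries, centralBinomMulFactorial, coeff_mk, mul_pow,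
    Nat.centralBinom_eq_two_mul_choose]
  push_cast
  rw [mul_assoc (C _)]

/-- The identity of Remark 2 of the paper:
`∑ₙ uₙ t^{2n} = (1+4ct⁴)^{-1/2} ∑ₙ C(2n,n) n! wₙ (-t²)ⁿ (1+4ct⁴)^{-n}`
in `ℚ[b,c][[t]]`, where `(1+4ct⁴)^{-1/2} = ∑ₖ binom(-1/2,k)(4ct⁴)^k` is the formal
binomial series and `Sinv` is the inverse of the invertible power series `S = 1+4ct⁴`.
The (formal) infinite sum over `n` is expressed coefficientwise: the coefficient of `t^m`
of the right-hand side is the (finite) sum over `n ≤ m` of the coefficients of `t^m`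
of the summands. -/
theorem statement7
    (b c : Rbc) (hb : b = MvPolynomial.X 0) (hc : c = MvPolynomial.X 1)
    (u w : ℕ → Rbc)
    (hu0 : u 0 = 1)
    (hurec : ∀ n : ℕ, 1 ≤ n →
      (n : Rbc) * u n =
        2 * (2 * (n : Rbc) - 1) * ((n : Rbc) * ((n : Rbc) - 1) - b) * u (n - 1)
          - 4 * c * ((n : Rbc) - 1) * (if 2 ≤ n then u (n - 2) else 0))
    (hw0 : w 0 = 1)
    (hwrec : ∀ n : ℕ, 1 ≤ n →
      (n : Rbc) * w n =
        -((n : Rbc) * ((n : Rbc) - 1) - b) * w (n - 1)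
          + c * (if 3 ≤ n then w (n - 3) else 0))
    (S Sinv : PowerSeries Rbc)
    (hS : S = 1 + 4 * PowerSeries.C c * PowerSeries.X ^ 4)
    (hSinv : S * Sinv = 1)
    (A : PowerSeries Rbc)
    (hA : A = PowerSeries.mk fun j : ℕ =>
      if j % 4 = 0 then
        MvPolynomial.C
            ((∏ i ∈ Finset.range (j / 4), ((-1 : ℚ) / 2 - (i : ℚ))) / ((j / 4).factorial : ℚ)) *
          (4 * c) ^ (j / 4)
      else 0) :
    ∀ m : ℕ,
      (if Even m then u (m / 2) else 0) =
        ∑ n ∈ Finset.range (m + 1),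
          PowerSeries.coeff m
            (A * (PowerSeries.C ((Nat.choose (2 * n) n : Rbc) * (n.factorial : Rbc) * w n) *
              (-(PowerSeries.X : PowerSeries Rbc) ^ 2) ^ n * Sinv ^ n)) :=
  statement7_general b c u w hu0 hurec hw0 hwrec S Sinv hS hSinv A hA
end

section
/- For every n ≥ 0 the identity u_n = Σ_{k=0}^{2n} (-1)^k · w_k · w_{2n-k} holds in ℚ[b,c]. -/
open PowerSeries

section
variable {R : Type*} [CommRing R]

local notation "𝒟" => d⁄dX R

lemma PowerSeries.coeff_ofNat_mul_s8 (n : ℕ) [n.AtLeastTwo] (F : R⟦X⟧) (m : ℕ) :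
    coeff m ((no_index (OfNat.ofNat n) : R⟦X⟧) * F) = OfNat.ofNat n * coeff m F := by
  rw [← map_ofNat C, coeff_C_mul]

lemma PowerSeries.derivative_mul (F G : R⟦X⟧) : 𝒟 (F * G) = 𝒟 F * G + F * 𝒟 G := by
  rw [Derivation.leibniz, smul_eq_mul, smul_eq_mul, add_comm, mul_comm G]

noncomputable def secondOrderOp (s b c : R) (F : R⟦X⟧) : R⟦X⟧ :=
  X ^ 2 * 𝒟 (𝒟 F) + (C s + 2 * X) * 𝒟 F - (C b + C c * X ^ 2) * F

noncomputable def thirdOrderOp (b c : R) (G : R⟦X⟧) : R⟦X⟧ :=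
  X ^ 4 * 𝒟 (𝒟 (𝒟 G)) + 6 * X ^ 3 * 𝒟 (𝒟 G)
    + (6 * X ^ 2 - 1 - 4 * C b * X ^ 2 - 4 * C c * X ^ 4) * 𝒟 G
    - (8 * C c * X ^ 3 + 4 * C b * X) * G

lemma coeff_secondOrderOp (s b c : R) (F : R⟦X⟧) (m : ℕ) :
    coeff m (secondOrderOp s b c F) =
      s * (m + 1) * coeff (m + 1) F + (m * (m + 1) - b) * coeff m F
        - c * (if 2 ≤ m then coeff (m - 2) F else 0) := by
  match m with
  | 0 | 1 | m + 2 =>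
    simp only [secondOrderOp, add_mul, mul_assoc, map_add, map_sub, coeff_X_pow_mul',
      coeff_derivative, coeff_C_mul, coeff_ofNat_mul_s8, coeff_succ_X_mul, coeff_zero_X_mul,
      Nat.reduceLeDiff, Nat.reduceSubDiff, Nat.le_add_left, if_true, if_false,
      add_tsub_cancel_right]
    push_cast
    ring

lemma coeff_thirdOrderOp_odd (b c : R) (G : R⟦X⟧) (k : ℕ) :
    coeff (2 * k + 1) (thirdOrderOp b c G) =
      (2 * k * (2 * k + 1) * (2 * k + 2) - 4 * b * (2 * k + 1)) * coeff (2 * k) G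
        - (2 * k + 2) * coeff (2 * k + 2) G - 8 * c * k * coeff (2 * k - 2) G := by
  match k with
  | 0 | 1 | k + 2 =>
    simp only [thirdOrderOp, add_mul, sub_mul, mul_assoc, map_add, map_sub, coeff_X_pow_mul',
      coeff_derivative, coeff_C_mul, coeff_ofNat_mul_s8, coeff_succ_X_mul, one_mul, mul_add,
      Nat.reduceLeDiff, Nat.reduceSubDiff, Nat.le_add_left, if_true]
    push_cast
    ring

lemma thirdOrderOp_mul_eq_zero {b c : R} {V W : R⟦X⟧} (hV : secondOrderOp (-1) b c V = 0)
    (hW : secondOrderOp 1 b c W = 0) : thirdOrderOp b c (V * W) = 0 := by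
  have h2 : 𝒟 (2 : R⟦X⟧) = 0 := by simpa using (𝒟).map_natCast 2
  have hV' := congrArg 𝒟 hV
  have hW' := congrArg 𝒟 hW
  simp only [secondOrderOp, map_add, map_sub, derivative_mul, derivative_C, derivative_X,
    derivative_pow, derivative_one, h2, map_zero, map_neg, map_one] at hV hW hV' hW'
  simp only [thirdOrderOp, derivative_mul, map_add]
  -- the multipliers eliminate `V''`, `W''`, `V'''` and `W'''` from the expanded left-hand side
  linear_combination ((2 * X - 1) * V + 3 * X ^ 2 * 𝒟 V) * hW
    + ((2 * X + 1) * W + 3 * X ^ 2 * 𝒟 W) * hV + X ^ 2 * V * hW' + X ^ 2 * W * hV'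

/-- For `s = 1` this is the recurrence of `w`; for `s = -1`, that of `(-1)ⁿ wₙ`. -/
def WRec (s b c : R) (a : ℕ → R) : Prop :=
  ∀ n : ℕ, 1 ≤ n →
    s * n * a n = -((n : R) * (n - 1) - b) * a (n - 1) + c * (if 3 ≤ n then a (n - 3) else 0)

def URec (b c : R) (a : ℕ → R) : Prop :=
  ∀ k : ℕ, ((k : R) + 1) * a (k + 1) =
    2 * (2 * k + 1) * ((k + 1) * k - b) * a k - 4 * c * k * a (k - 1)

lemma WRec.neg_one_pow_mul {s b c : R} {a : ℕ → R} (h : WRec s b c a) :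
    WRec (-s) b c (fun n => (-1) ^ n * a n) := by
  intro n hn
  obtain ⟨k, rfl⟩ := Nat.exists_eq_add_of_le' hn
  have hk := h (k + 1) hn
  simp only [Nat.add_sub_cancel] at hk ⊢
  rcases lt_or_ge k 2 with hk2 | hk2
  · rw [if_neg (by omega)] at hk ⊢
    linear_combination (-1) ^ k * hk
  · obtain ⟨j, rfl⟩ := Nat.exists_eq_add_of_le' hk2
    rw [if_pos (by omega), show j + 2 + 1 - 3 = j by omega] at hk ⊢
    push_cast at hk ⊢
    linear_combination (-1) ^ j * hk

lemma secondOrderOp_mk_eq_zero {s b c : R} {a : ℕ → R} (h : WRec s b c a) :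
    secondOrderOp s b c (mk a) = 0 := by
  ext m
  have hm := h (m + 1) (by omega)
  simp only [Nat.add_sub_cancel, show 3 ≤ m + 1 ↔ 2 ≤ m by omega,
    show m + 1 - 3 = m - 2 by omega] at hm
  rw [coeff_secondOrderOp]
  simp only [coeff_mk, map_zero]
  push_cast at hm
  linear_combination hm

variable [IsDomain R] [CharZero R]

lemma URec.eq {b c : R} {u v : ℕ → R} (hu : URec b c u) (hv : URec b c v) (h0 : u 0 = v 0) :
    u = v := by
  funext n
  induction n using Nat.strong_induction_on with
  | _ n ih =>
    rcases n with _ | k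
    · exact h0
    · refine mul_left_cancel₀ (Nat.cast_add_one_ne_zero k) ?_
      rw [hu, hv, ih k (by omega), ih (k - 1) (by omega)]

lemma uRec_coeff_two_mul {b c : R} {G : R⟦X⟧} (hG : thirdOrderOp b c G = 0) :
    URec b c (fun n => coeff (2 * n) G) := by
  intro k
  have hk := coeff_thirdOrderOp_odd b c G k
  rw [hG, map_zero] at hk
  refine mul_left_cancel₀ (two_ne_zero (α := R)) ?_
  simp only [Nat.mul_sub_one, mul_add_one]
  linear_combination hk

end

theorem statement8_general
    (b c : Rbc)
    (u w : ℕ → Rbc)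
    (hu0 : u 0 = 1)
    (hurec : ∀ n : ℕ, 1 ≤ n →
      (n : Rbc) * u n =
        2 * (2 * (n : Rbc) - 1) * ((n : Rbc) * ((n : Rbc) - 1) - b) * u (n - 1)
          - 4 * c * ((n : Rbc) - 1) * (if 2 ≤ n then u (n - 2) else 0))
    (hw0 : w 0 = 1)
    (hwrec : ∀ n : ℕ, 1 ≤ n →
      (n : Rbc) * w n =
        -((n : Rbc) * ((n : Rbc) - 1) - b) * w (n - 1)
          + c * (if 3 ≤ n then w (n - 3) else 0)) :
    ∀ n : ℕ,
      u n = ∑ k ∈ Finset.range (2 * n + 1), (-1 : Rbc) ^ k * w k * w (2 * n - k) := by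
  have hw : WRec 1 b c w := fun n hn => by simpa using hwrec n hn
  have hu : URec b c u := fun k => by
    have hk := hurec (k + 1) (by omega)
    rw [Nat.add_sub_cancel, show k + 1 - 2 = k - 1 by omega] at hk
    rcases k with _ | k
    · push_cast at hk ⊢
      linear_combination hk
    · rw [if_pos (by omega)] at hk
      push_cast at hk ⊢
      linear_combination hk
  have hVW := thirdOrderOp_mul_eq_zero (secondOrderOp_mk_eq_zero hw.neg_one_pow_mul)
    (secondOrderOp_mk_eq_zero hw)
  have hu_eq := hu.eq (uRec_coeff_two_mul hVW) (by simp [coeff_mul, hu0, hw0])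
  intro n
  rw [congrFun hu_eq n, coeff_mul, Finset.Nat.sum_antidiagonal_eq_sum_range_succ_mk]
  simp [coeff_mk, mul_assoc]

/-- The identity `uₙ = ∑_{k=0}^{2n} (-1)^k wₖ w_{2n-k}` in `ℚ[b,c]`. -/
theorem statement8
    (b c : Rbc) (hb : b = MvPolynomial.X 0) (hc : c = MvPolynomial.X 1)
    (u w : ℕ → Rbc)
    (hu0 : u 0 = 1)
    (hurec : ∀ n : ℕ, 1 ≤ n →
      (n : Rbc) * u n =
        2 * (2 * (n : Rbc) - 1) * ((n : Rbc) * ((n : Rbc) - 1) - b) * u (n - 1)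
          - 4 * c * ((n : Rbc) - 1) * (if 2 ≤ n then u (n - 2) else 0))
    (hw0 : w 0 = 1)
    (hwrec : ∀ n : ℕ, 1 ≤ n →
      (n : Rbc) * w n =
        -((n : Rbc) * ((n : Rbc) - 1) - b) * w (n - 1)
          + c * (if 3 ≤ n then w (n - 3) else 0)) :
    ∀ n : ℕ,
      u n = ∑ k ∈ Finset.range (2 * n + 1), (-1 : Rbc) ^ k * w k * w (2 * n - k) :=
  statement8_general b c u w hu0 hurec hw0 hwrec
end

section
/- If Q_i(t) = t for all i = 1, …, d, then for every m ∈ ℤ_{≥0}^d the rational function ⟨Q⟩_m is the constant 4^{-M} · C(2M,M) · M!/(m_1!⋯m_d!), where M = m_1 + … + m_d; equivalently, Σ_{m∈ℤ_{≥0}^d} ⟨Q⟩_m z^m = (1 - z_1 - … - z_d)^{-1/2} as formal power series. -/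
/-!
Write `C(m) = C(2M,M)·M!/(4^M ∏ mᵢ!)` and `L = ⟨m, x⟩`. From
`M·C(2M,M) = 2(2M - 1)·C(2M-2,M-1)` one gets `(2M - 1)·C(m - eᵢ) = 2mᵢ·C(m)` whenever `mᵢ ≥ 1`;
when `mᵢ = 0` the term `⟨Q⟩_{m-eᵢ}` vanishes, as does `2mᵢ·C(m)`. So by induction on `M`,
multiplying the recursion by `2M - 1` turns its right-hand side into
`∑ᵢ (L - xᵢ/2)·2mᵢ·C(m) = (2M - 1)·L·C(m)`, and `L ≠ 0` since the `xᵢ` are independent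
variables.
-/

open Finset

noncomputable def invSqrtCoeff {ι : Type*} [Fintype ι] (K : Type*) [Field K] (n : ι → ℕ) :
    K :=
  (Nat.choose (2 * ∑ i, n i) (∑ i, n i) : K) * ((∑ i, n i).factorial : K) /
    ((4 : K) ^ (∑ i, n i) * ∏ i, ((n i).factorial : K))

lemma two_mul_add_one_mul_centralBinom_div {K : Type*} [Field K] [CharZero K]
    (N a : ℕ) {P : K} (hP : P ≠ 0) :
    (2 * N + 1 : K) * ((Nat.choose (2 * N) N : K) * N.factorial / (4 ^ N * (a.factorial * P))) =
      2 * (a + 1) * ((Nat.choose (2 * (N + 1)) (N + 1) : K) * (N + 1).factorial /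
        (4 ^ (N + 1) * ((a + 1).factorial * P))) := by
  have hrec : ((N + 1 : ℕ) : K) * (Nat.choose (2 * (N + 1)) (N + 1) : K) =
      2 * (2 * N + 1) * (Nat.choose (2 * N) N : K) := by
    exact_mod_cast Nat.succ_mul_centralBinom_succ N
  push_cast [Nat.factorial_succ] at hrec ⊢
  have : (a.factorial : K) ≠ 0 := mod_cast a.factorial_ne_zero
  field_simp
  linear_combination (-2 : K) * N.factorial * 4 ^ N * hrec

lemma sum_add_single {ι : Type*} [Fintype ι] [DecidableEq ι] (n : ι → ℕ) (i : ι) :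
    ∑ j, (n + Pi.single i 1 : ι → ℕ) j = ∑ j, n j + 1 := by
  simp [Finset.sum_add_distrib]

lemma two_mul_sum_add_one_mul_invSqrtCoeff {ι : Type*} [Fintype ι] [DecidableEq ι]
    {K : Type*} [Field K] [CharZero K] (n : ι → ℕ) (i : ι) :
    (2 * (∑ j, n j : ℕ) + 1 : K) * invSqrtCoeff K n =
      2 * (n i + 1 : ℕ) * invSqrtCoeff K (n + Pi.single i 1) := by
  have hprod (m : ι → ℕ) : ∏ j, ((m j).factorial : K) =
      (m i).factorial * ∏ j ∈ univ.erase i, ((m j).factorial : K) :=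
    (mul_prod_erase _ _ (mem_univ i)).symm
  have hrest : ∏ j ∈ univ.erase i, (((n + Pi.single i 1 : ι → ℕ) j).factorial : K) =
      ∏ j ∈ univ.erase i, ((n j).factorial : K) :=
    prod_congr rfl fun j hj => by simp [ne_of_mem_erase hj]
  have hP : ∏ j ∈ univ.erase i, ((n j).factorial : K) ≠ 0 :=
    prod_ne_zero_iff.mpr fun j _ => mod_cast (n j).factorial_ne_zero
  unfold invSqrtCoeff
  rw [sum_add_single, hprod n, hprod (n + Pi.single i 1), hrest]
  simpa using two_mul_add_one_mul_centralBinom_div (∑ j, n j) (n i) hP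

lemma natCast_add_single_sub_single {ι : Type*} [DecidableEq ι] (n : ι → ℕ) (i : ι) :
    (fun j => ((n + Pi.single i 1 : ι → ℕ) j : ℤ)) - Pi.single i 1 =
      fun j => (n j : ℤ) := by
  funext j
  by_cases hj : j = i
  · subst hj; simp
  · simp [hj]

lemma sum_natCast_mul_X_ne_zero {ι : Type*} [Fintype ι] {R : Type*} [CommSemiring R]
    [CharZero R] {n : ι → ℕ} (hn : n ≠ 0) :
    ∑ i, (n i : MvPolynomial ι R) * MvPolynomial.X i ≠ 0 := by
  intro h
  have h1 := congrArg (MvPolynomial.eval fun _ => (1 : R)) h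
  simp only [map_sum, map_mul, map_natCast, MvPolynomial.eval_X, mul_one, map_zero] at h1
  exact hn (funext fun i => sum_eq_zero_iff.mp (mod_cast h1) i (mem_univ i))

theorem eq_invSqrtCoeff_of_recursion {ι : Type*} [Fintype ι] [DecidableEq ι]
    {K : Type*} [Field K] [CharZero K] (x : ι → K)
    (hx : ∀ n : ι → ℕ, n ≠ 0 → ∑ i, (n i : K) * x i ≠ 0)
    (F : (ι → ℤ) → K) (hF0 : F 0 = 1)
    (hFneg : ∀ m : ι → ℤ, (∃ i, m i < 0) → F m = 0)
    (hFrec : ∀ m : ι → ℤ, (∀ i, 0 ≤ m i) → m ≠ 0 →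
      (∑ i, (m i : K) * x i) * F m =
        ∑ i, ((∑ j, (m j : K) * x j) - x i / 2) * F (m - Pi.single i 1))
    (n : ι → ℕ) : F (fun i => n i) = invSqrtCoeff K n := by
  induction hN : ∑ i, n i generalizing n with
  | zero =>
    obtain rfl : n = 0 := funext fun i => sum_eq_zero_iff.mp hN i (mem_univ i)
    rw [show (fun i => ((0 : ι → ℕ) i : ℤ)) = 0 by ext; simp, hF0]
    simp [invSqrtCoeff]
  | succ N ih =>
    have hn : n ≠ 0 := by rintro rfl; simp at hN
    have hshift (i : ι) : (2 * N + 1 : K) * F ((fun j => (n j : ℤ)) - Pi.single i 1) =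
        2 * n i * invSqrtCoeff K n := by
      rcases Nat.eq_zero_or_pos (n i) with h0 | hpos
      · rw [hFneg _ ⟨i, by simp [h0]⟩, h0]; simp
      · obtain ⟨n', rfl⟩ : ∃ n', n = n' + Pi.single i 1 :=
          ⟨n - Pi.single i 1, by
            funext j; obtain rfl | hj := eq_or_ne j i <;> simp [*, Nat.sub_add_cancel hpos]⟩
        have hN' : ∑ j, n' j = N := by rw [sum_add_single] at hN; omega
        rw [natCast_add_single_sub_single, ih n' hN', ← hN', Pi.add_apply, Pi.single_eq_same]
        exact_mod_cast two_mul_sum_add_one_mul_invSqrtCoeff (K := K) n' i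
    set L := ∑ i, (n i : K) * x i with hL
    have hrec := hFrec (fun i => n i) (fun i => by positivity) (by simpa [funext_iff] using hn)
    simp only [Int.cast_natCast] at hrec
    have hsum : ∑ i, (n i : K) = N + 1 := by exact_mod_cast hN
    have hodd : (2 * N + 1 : K) ≠ 0 := by norm_cast
    refine mul_left_cancel₀ (hx n hn) (mul_left_cancel₀ hodd ?_)
    calc (2 * N + 1 : K) * (L * F fun i => n i)
        = ∑ i, (L - x i / 2) *
            ((2 * N + 1 : K) * F ((fun j => (n j : ℤ)) - Pi.single i 1)) := by
          rw [hrec, mul_sum]; exact sum_congr rfl fun i _ => by ring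
      _ = ∑ i, (L - x i / 2) * (2 * n i * invSqrtCoeff K n) := by simp only [hshift]
      _ = ∑ i, (2 * L * invSqrtCoeff K n * n i - invSqrtCoeff K n * (n i * x i)) :=
          sum_congr rfl fun i _ => by ring
      _ = (2 * L * ∑ i, (n i : K) - L) * invSqrtCoeff K n := by
          rw [sum_sub_distrib, ← mul_sum, ← mul_sum, ← hL]; ring
      _ = (2 * N + 1 : K) * (L * invSqrtCoeff K n) := by rw [hsum]; ring

theorem statement12_general
    (d : ℕ)
    (Q : Fin d → Polynomial ℤ)
    (hQ : ∀ i, Q i = Polynomial.X)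
    (K : Type*) [Field K]
    [Algebra (MvPolynomial (Fin d) ℚ) K] [IsFractionRing (MvPolynomial (Fin d) ℚ) K]
    (x : Fin d → K)
    (hx : ∀ i, x i = algebraMap (MvPolynomial (Fin d) ℚ) K (MvPolynomial.X i))
    (F : (Fin d → ℤ) → K)
    (hF0 : F 0 = 1)
    (hFneg : ∀ m : Fin d → ℤ, (∃ i, m i < 0) → F m = 0)
    (hFrec : ∀ m : Fin d → ℤ, (∀ i, 0 ≤ m i) → m ≠ 0 →
      (∑ i, (m i : K) * x i) * F m =
        ∑ i, Polynomial.aeval ((∑ j, (m j : K) * x j) - x i / 2) (Q i) *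
          F (m - Pi.single i 1)) :
    ∀ m : Fin d → ℤ, (∀ i, 0 ≤ m i) →
      F m = ((Nat.choose (2 * (∑ i, m i).toNat) (∑ i, m i).toNat : K) *
              ((∑ i, m i).toNat.factorial : K)) /
            ((4 : K) ^ (∑ i, m i).toNat * ∏ i, ((m i).toNat.factorial : K)) := by
  have hinj := IsFractionRing.injective (MvPolynomial (Fin d) ℚ) K
  have := charZero_of_injective_algebraMap hinj
  have hL (n : Fin d → ℕ) (hn : n ≠ 0) : ∑ i, (n i : K) * x i ≠ 0 := by
    simpa [hx] using (map_ne_zero_iff _ hinj).mpr (sum_natCast_mul_X_ne_zero (R := ℚ) hn)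
  simp only [hQ, Polynomial.aeval_X] at hFrec
  intro m hm
  obtain ⟨n, rfl⟩ : ∃ n : Fin d → ℕ, m = fun i => (n i : ℤ) :=
    ⟨fun i => (m i).toNat, funext fun i => (Int.toNat_of_nonneg (hm i)).symm⟩
  rw [eq_invSqrtCoeff_of_recursion x hL F hF0 hFneg hFrec n]
  simp only [invSqrtCoeff, ← Nat.cast_sum, Int.toNat_natCast]

/-- If `Qᵢ(t) = t` for all `i = 1, …, d`, then for every `m ∈ ℤ_{≥0}^d` the rational
function `⟨Q⟩ₘ` equals the constant `4^{-M}·C(2M,M)·M!/(m₁!⋯m_d!)`, where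
`M = m₁ + … + m_d` (equivalently, `∑ₘ ⟨Q⟩ₘ zᵐ = (1 - z₁ - … - z_d)^{-1/2}`). -/
theorem statement12
    (d : ℕ) (hd : 1 ≤ d)
    (Q : Fin d → Polynomial ℤ)
    (hQ : ∀ i, Q i = Polynomial.X)
    (K : Type*) [Field K]
    [Algebra (MvPolynomial (Fin d) ℚ) K] [IsFractionRing (MvPolynomial (Fin d) ℚ) K]
    (x : Fin d → K)
    (hx : ∀ i, x i = algebraMap (MvPolynomial (Fin d) ℚ) K (MvPolynomial.X i))
    (F : (Fin d → ℤ) → K)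
    (hF0 : F 0 = 1)
    (hFneg : ∀ m : Fin d → ℤ, (∃ i, m i < 0) → F m = 0)
    (hFrec : ∀ m : Fin d → ℤ, (∀ i, 0 ≤ m i) → m ≠ 0 →
      (∑ i, (m i : K) * x i) * F m =
        ∑ i, Polynomial.aeval ((∑ j, (m j : K) * x j) - x i / 2) (Q i) *
          F (m - Pi.single i 1)) :
    ∀ m : Fin d → ℤ, (∀ i, 0 ≤ m i) →
      F m = ((Nat.choose (2 * (∑ i, m i).toNat) (∑ i, m i).toNat : K) *
              ((∑ i, m i).toNat.factorial : K)) /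
            ((4 : K) ^ (∑ i, m i).toNat * ∏ i, ((m i).toNat.factorial : K)) :=
  statement12_general d Q hQ K x hx F hF0 hFneg hFrec
end
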